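/- arXiv:1808.06101 — 5 statements merged into one kernel-verified Lean document; each statement's English description precedes it below -/
import Mathlib

section
/- Let G be a simple graph with minimum degree δ ≥ 2 and girth g ≥ 3, and let X be a nonempty vertex subset of G. If d(X) < δ, then |X| ≥ n₁*(δ, g). -/
open Finset

/-- The `i`-th largest eigenvalue (0-indexed) of a real symmetric matrix,
with junk value `0` if the matrix is not symmetric or `i` is out of range. -/
noncomputable def kthLargestEigenvalue {n : ℕ} (M : Matrix (Fin n) (Fin n) ℝ) (i : ℕ) : ℝ :=
  if h : M.IsHermitian ∧ i < n then
    (h.1.eigenvalues ∘ Tuple.sort h.1.eigenvalues) ((⟨i, h.2⟩ : Fin n).rev)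
  else 0

/-- The diagonal matrix of vertex degrees of a graph, over `ℝ`. -/
noncomputable def degreeMatrix {n : ℕ} (G : SimpleGraph (Fin n)) [DecidableRel G.Adj] :
    Matrix (Fin n) (Fin n) ℝ :=
  Matrix.diagonal fun v => (G.degree v : ℝ)

/-- The quantity `n₁*(δ, g)` with `t = ⌊(g-1)/2⌋`:
`1 + δ + ∑_{i=2}^{t} (δ-1)^i` if `g = 2t+1`, and
`2 + 2(δ-1)^t + ∑_{i=1}^{t-1} (δ-1)^i` if `g = 2t+2`. -/
def nOneStar (δ g : ℕ) : ℕ :=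
  if g % 2 = 1 then 1 + δ + ∑ i ∈ Finset.Icc 2 ((g - 1) / 2), (δ - 1) ^ i
  else 2 + 2 * (δ - 1) ^ ((g - 1) / 2) + ∑ i ∈ Finset.Icc 1 ((g - 1) / 2 - 1), (δ - 1) ^ i

/-- `e(X, Y)`: the number of edges with one end in `X` and the other end in `Y`
(for disjoint `X` and `Y`), counted as adjacent pairs in `X × Y`. -/
def edgesBetween {V : Type*} [Fintype V] (G : SimpleGraph V) [DecidableRel G.Adj]
    (X Y : Finset V) : ℕ :=
  ((X ×ˢ Y).filter fun p => G.Adj p.1 p.2).card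

/-- `d(X)`: the number of edges of `G` with exactly one endpoint in `X`. -/
def cutSize {V : Type*} [Fintype V] [DecidableEq V] (G : SimpleGraph V) [DecidableRel G.Adj]
    (X : Finset V) : ℕ :=
  edgesBetween G X Xᶜ

/-- `τ(G) ≥ k`: the graph `G` contains `k` pairwise edge-disjoint spanning trees. -/
def HasEdgeDisjointSpanningTrees {V : Type*} (G : SimpleGraph V) (k : ℕ) : Prop :=
  ∃ T : Fin k → SimpleGraph V, (∀ i, T i ≤ G) ∧ (∀ i, (T i).IsTree) ∧
    ∀ i j, i ≠ j → Disjoint (T i).edgeSet (T j).edgeSet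


namespace StmtAux

open SimpleGraph Walk

section walks

variable {V : Type*} [DecidableEq V] {H : SimpleGraph V}



open SimpleGraph Walk

variable {V : Type*} [DecidableEq V] {H : SimpleGraph V}

lemma closed_path_eq_nil {u : V} {p : H.Walk u u} (hp : p.IsPath) : p = Walk.nil := by
  cases p with
  | nil => rfl
  | cons h q =>
    exfalso
    have hnd := (Walk.isPath_def _).mp hp
    rw [Walk.support_cons] at hnd
    exact (List.nodup_cons.mp hnd).1 q.end_mem_support

lemma length_one_unique {u w : V} {p q : H.Walk u w} (hp : p.length = 1) (hq : q.length = 1) :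
    p = q := by
  cases p with
  | nil => simp at hp
  | cons hadj p' =>
    cases q with
    | nil => simp at hq
    | cons hadj' q' =>
      rename_i v v'
      have hp0 : p'.length = 0 := by simpa using hp
      have hq0 : q'.length = 0 := by simpa using hq
      have hvw : v = w := Walk.eq_of_length_eq_zero hp0
      have hvw' : v' = w := Walk.eq_of_length_eq_zero hq0
      subst hvw
      subst hvw'
      have hp'nil : p' = Walk.nil := (Walk.nil_iff_length_eq.mpr hp0).eq_nil
      have hq'nil : q' = Walk.nil := (Walk.nil_iff_length_eq.mpr hq0).eq_nil
      subst hp'nil; subst hq'nil; rfl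

lemma length_eq_one_of_mem_edges {u w : V} {p : H.Walk u w} (hp : p.IsPath)
    (he : s(u, w) ∈ p.edges) : p.length = 1 := by
  cases p with
  | nil => simp at he
  | cons hadj p' =>
    rename_i v
    rw [Walk.edges_cons, List.mem_cons] at he
    rcases he with he | he
    · have := Sym2.eq_iff.mp he
      rcases this with ⟨-, hwv⟩ | ⟨huv, -⟩
      · subst hwv
        have hp' : p'.IsPath := hp.of_cons
        have : p' = Walk.nil := closed_path_eq_nil hp'
        subst this; simp
      · exact absurd huv.symm hadj.ne'
    · exfalso
      have hu : u ∈ p'.support := p'.fst_mem_support_of_mem_edges he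
      have := (Walk.cons_isPath_iff hadj p').mp hp
      exact this.2 hu

/-- Two distinct paths between the same pair of vertices yield a cycle of length at most
the sum of their lengths. -/
lemma cycle_of_two_paths : ∀ n : ℕ, ∀ {u w : V} (p q : H.Walk u w),
    p.IsPath → q.IsPath → p ≠ q → p.length + q.length ≤ n →
    ∃ (x : V) (c : H.Walk x x), c.IsCycle ∧ c.length ≤ p.length + q.length := by
  intro n
  induction n using Nat.strong_induction_on with
  | _ n IH =>
  intro u w p q hp hq hne hlen
  by_cases hint : ∃ z, z ∈ p.support ∧ z ∈ q.support ∧ z ≠ u ∧ z ≠ w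
  · obtain ⟨z, hzp, hzq, hzu, hzw⟩ := hint
    have hsp := congrArg Walk.length (p.take_spec hzp)
    have hsq := congrArg Walk.length (q.take_spec hzq)
    rw [Walk.length_append] at hsp hsq
    have hp2pos : 1 ≤ (p.dropUntil z hzp).length := by
      rcases Nat.eq_zero_or_pos (p.dropUntil z hzp).length with h0 | h1
      · exact absurd (Walk.eq_of_length_eq_zero h0) hzw
      · exact h1
    have hq2pos : 1 ≤ (q.dropUntil z hzq).length := by
      rcases Nat.eq_zero_or_pos (q.dropUntil z hzq).length with h0 | h1
      · exact absurd (Walk.eq_of_length_eq_zero h0) hzw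
      · exact h1
    have hp1pos : 1 ≤ (p.takeUntil z hzp).length := by
      rcases Nat.eq_zero_or_pos (p.takeUntil z hzp).length with h0 | h1
      · exact absurd (Walk.eq_of_length_eq_zero h0) hzu.symm
      · exact h1
    have hq1pos : 1 ≤ (q.takeUntil z hzq).length := by
      rcases Nat.eq_zero_or_pos (q.takeUntil z hzq).length with h0 | h1
      · exact absurd (Walk.eq_of_length_eq_zero h0) hzu.symm
      · exact h1
    by_cases h1 : p.takeUntil z hzp = q.takeUntil z hzq
    · have h2 : p.dropUntil z hzp ≠ q.dropUntil z hzq := by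
        intro h2
        apply hne
        rw [← p.take_spec hzp, ← q.take_spec hzq, h1, h2]
      obtain ⟨x, c, hc, hcl⟩ := IH ((p.dropUntil z hzp).length + (q.dropUntil z hzq).length)
        (by omega) _ _ (hp.dropUntil hzp) (hq.dropUntil hzq) h2 le_rfl
      exact ⟨x, c, hc, by omega⟩
    · obtain ⟨x, c, hc, hcl⟩ := IH ((p.takeUntil z hzp).length + (q.takeUntil z hzq).length)
        (by omega) _ _ (hp.takeUntil hzp) (hq.takeUntil hzq) h1 le_rfl
      exact ⟨x, c, hc, by omega⟩
  · push_neg at hint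
    -- no common interior vertex
    have hppos : 1 ≤ p.length := by
      rcases Nat.eq_zero_or_pos p.length with h0 | h1
      · exfalso
        have huw := Walk.eq_of_length_eq_zero h0
        subst huw
        have hpnil : p = Walk.nil := (Walk.nil_iff_length_eq.mpr h0).eq_nil
        have hqnil : q = Walk.nil := closed_path_eq_nil hq
        exact hne (hpnil.trans hqnil.symm)
      · exact h1
    have hqpos : 1 ≤ q.length := by
      rcases Nat.eq_zero_or_pos q.length with h0 | h1
      · exfalso
        have huw := Walk.eq_of_length_eq_zero h0
        subst huw
        have hqnil : q = Walk.nil := (Walk.nil_iff_length_eq.mpr h0).eq_nil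
        have hpnil : p = Walk.nil := closed_path_eq_nil hp
        exact hne (hpnil.trans hqnil.symm)
      · exact h1
    have huw : u ≠ w := by
      intro h
      subst h
      exact hne ((closed_path_eq_nil hp).trans (closed_path_eq_nil hq).symm)
    have hnotboth : ¬ (p.length = 1 ∧ q.length = 1) := by
      rintro ⟨h1, h2⟩
      exact hne (length_one_unique h1 h2)
    -- build the cycle
    refine ⟨u, p.append q.reverse, ?_, ?_⟩
    · rw [Walk.isCycle_def]
      refine ⟨?_, ?_, ?_⟩
      · -- trail
        rw [Walk.isTrail_def, Walk.edges_append]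
        refine List.Nodup.append hp.isTrail.edges_nodup
          (hq.reverse.isTrail.edges_nodup) ?_
        intro e hep heq
        revert hep heq
        induction e using Sym2.ind with
        | _ a b =>
        intro hep heq
        have heq' : s(a,b) ∈ q.edges := by
          rw [Walk.edges_reverse, List.mem_reverse] at heq
          exact heq
        have hadj : H.Adj a b := p.adj_of_mem_edges hep
        have hap : a ∈ p.support := p.fst_mem_support_of_mem_edges hep
        have hbp : b ∈ p.support := p.snd_mem_support_of_mem_edges hep
        have haq : a ∈ q.support := q.fst_mem_support_of_mem_edges heq'
        have hbq : b ∈ q.support := q.snd_mem_support_of_mem_edges heq'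
        have ha : a = u ∨ a = w := by
          by_cases h : a = u
          · exact Or.inl h
          · exact Or.inr (hint a hap haq h)
        have hb : b = u ∨ b = w := by
          by_cases h : b = u
          · exact Or.inl h
          · exact Or.inr (hint b hbp hbq h)
        have hab : a ≠ b := hadj.ne
        have hePuw : s(a, b) = s(u, w) := by
          rcases ha with rfl | rfl <;> rcases hb with rfl | rfl
          · exact absurd rfl hab
          · rfl
          · exact Sym2.eq_swap
          · exact absurd rfl hab
        apply hnotboth
        constructor
        · exact length_eq_one_of_mem_edges hp (hePuw ▸ hep)
        · exact length_eq_one_of_mem_edges hq (hePuw ▸ heq')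
      · -- nonnil
        intro hnil
        have : (p.append q.reverse).length = 0 := by rw [hnil]; rfl
        rw [Walk.length_append, Walk.length_reverse] at this
        omega
      · -- support tail nodup
        have hsupp : (p.append q.reverse).support.tail
            = p.support.tail ++ q.reverse.support.tail := by
          rw [Walk.support_append]
          conv_lhs => rw [p.support_eq_cons]
          rw [List.cons_append, List.tail_cons, p.support_eq_cons, List.tail_cons]
        rw [hsupp]
        have hnp : p.support.tail.Nodup := ((Walk.isPath_def _).mp hp).tail
        have hnq : q.reverse.support.tail.Nodup := ((Walk.isPath_def _).mp hq.reverse).tail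
        refine List.Nodup.append hnp hnq ?_
        intro z hzp hzq
        have hzp' : z ∈ p.support := List.mem_of_mem_tail hzp
        have hzq' : z ∈ q.support := by
          have : z ∈ q.reverse.support := List.mem_of_mem_tail hzq
          rwa [Walk.support_reverse, List.mem_reverse] at this
        have hzu : z ≠ u := by
          intro h; subst h
          have := (Walk.isPath_def _).mp hp
          rw [p.support_eq_cons] at this
          exact (List.nodup_cons.mp this).1 hzp
        have hzw : z ≠ w := by
          intro h; subst h
          have := (Walk.isPath_def _).mp hq.reverse
          rw [q.reverse.support_eq_cons] at this
          exact (List.nodup_cons.mp this).1 hzq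
        exact hzw (hint z hzp' hzq' hzu)
    · rw [Walk.length_append, Walk.length_reverse]

lemma dist_add_dist_le_of_mem_support {r x z : V} (p : H.Walk r x) (hz : z ∈ p.support) :
    H.dist r z + H.dist z x ≤ p.length := by
  have hsp := congrArg Walk.length (p.take_spec hz)
  rw [Walk.length_append] at hsp
  have h1 := SimpleGraph.dist_le (p.takeUntil z hz)
  have h2 := SimpleGraph.dist_le (p.dropUntil z hz)
  omega






/-- girth at least `gnat` -/
def GirthGe (H : SimpleGraph V) (gnat : ℕ) : Prop :=
  ∀ (x : V) (cw : H.Walk x x), cw.IsCycle → gnat ≤ cw.length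

lemma GirthGe.two_paths {gnat : ℕ} (hg : GirthGe H gnat) {u w : V} {p q : H.Walk u w}
    (hp : p.IsPath) (hq : q.IsPath) (hne : p ≠ q) : gnat ≤ p.length + q.length := by
  obtain ⟨x, c, hc, hcl⟩ := cycle_of_two_paths (p.length + q.length) p q hp hq hne le_rfl
  exact le_trans (hg x c hc) hcl

lemma concat_isPath {u x y : V} {p : H.Walk u x} (hp : p.IsPath) (h : H.Adj x y)
    (hy : y ∉ p.support) : (p.concat h).IsPath := by
  have h1 : (p.concat h).reverse.IsPath := by
    rw [Walk.reverse_concat]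
    exact (hp.reverse).cons (by rwa [Walk.support_reverse, List.mem_reverse])
  have := h1.reverse
  rwa [Walk.reverse_reverse] at this

lemma concat_ne {u x1 x2 y : V} {p1 : H.Walk u x1} {p2 : H.Walk u x2}
    (h1 : H.Adj x1 y) (h2 : H.Adj x2 y) (hne : x1 ≠ x2) :
    p1.concat h1 ≠ p2.concat h2 := by
  intro h
  have := congrArg (fun w : H.Walk u y => w.reverse.getVert 1) h
  simp only [Walk.reverse_concat, Walk.getVert_cons_succ, Walk.getVert_zero] at this
  exact hne this

lemma dist_le_of_adj {r x y : V} (hr : H.Reachable r x) (h : H.Adj x y) :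
    H.dist r y ≤ H.dist r x + 1 := by
  obtain ⟨p, hp, hl⟩ := hr.exists_path_of_dist
  have := SimpleGraph.dist_le (p.concat h)
  rwa [Walk.length_concat, hl] at this

/-- Parent uniqueness with a single root. -/
lemma parent_unique_root {gnat : ℕ} (hg : GirthGe H gnat) {v y x1 x2 : V} {j : ℕ}
    (hj : 1 ≤ j) (h2j : 2 * j + 1 ≤ gnat)
    (hylb : j ≤ H.dist v y)
    (h1 : H.Adj x1 y) (h2 : H.Adj x2 y)
    (hx1 : H.dist v x1 = j - 1) (hx2 : H.dist v x2 = j - 1)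
    (hr1 : H.Reachable v x1) (hr2 : H.Reachable v x2) : x1 = x2 := by
  by_contra hne
  obtain ⟨p1, hp1, hl1⟩ := hr1.exists_path_of_dist
  obtain ⟨p2, hp2, hl2⟩ := hr2.exists_path_of_dist
  have hy1 : y ∉ p1.support := by
    intro hmem
    have := dist_add_dist_le_of_mem_support p1 hmem
    have h1' := SimpleGraph.dist_le (Walk.cons h1.symm Walk.nil : H.Walk y x1)
    simp at h1'
    omega
  have hy2 : y ∉ p2.support := by
    intro hmem
    have := dist_add_dist_le_of_mem_support p2 hmem
    have h2' := SimpleGraph.dist_le (Walk.cons h2.symm Walk.nil : H.Walk y x2)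
    simp at h2'
    omega
  have hw1 : (p1.concat h1).IsPath := concat_isPath hp1 h1 hy1
  have hw2 : (p2.concat h2).IsPath := concat_isPath hp2 h2 hy2
  have hbig := hg.two_paths hw1 hw2 (concat_ne h1 h2 hne)
  rw [Walk.length_concat, Walk.length_concat, hl1, hl2] at hbig
  omega

/-- No same-level edges with a single root. -/
lemma no_same_level_root {gnat : ℕ} (hg : GirthGe H gnat) {v x z : V} {j : ℕ}
    (h2j : 2 * j + 2 ≤ gnat)
    (hx : H.dist v x = j) (hxlb : j ≤ H.dist v x)
    (hz : H.dist v z = j)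
    (hrx : H.Reachable v x) (hrz : H.Reachable v z)
    (ha : H.Adj z x) : False := by
  obtain ⟨p, hp, hlp⟩ := hrx.exists_path_of_dist
  obtain ⟨q, hq, hlq⟩ := hrz.exists_path_of_dist
  have hxq : x ∉ q.support := by
    intro hmem
    have := dist_add_dist_le_of_mem_support q hmem
    have hxz : 1 ≤ H.dist x z := by
      have hpos := (ha.symm.reachable).pos_dist_of_ne ha.ne'
      omega
    omega
  have hw : (q.concat ha).IsPath := concat_isPath hq ha hxq
  have hne : p ≠ q.concat ha := by
    intro h
    have := congrArg Walk.length h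
    rw [Walk.length_concat, hlp, hlq] at this
    omega
  have hbig := hg.two_paths hp hw hne
  rw [Walk.length_concat, hlp, hlq] at hbig
  omega

/-- Mixed-roots parent situation is impossible. -/
lemma parent_mixed {gnat : ℕ} (hg : GirthGe H gnat) {r1 r2 x1 x2 y : V} {j : ℕ}
    (hrr : H.Adj r1 r2) (hj : 1 ≤ j) (h2j : 2 * j + 2 ≤ gnat)
    (hx1 : H.dist r1 x1 = j - 1) (hr1 : H.Reachable r1 x1)
    (hx2 : H.dist r2 x2 = j - 1) (hr2 : H.Reachable r2 x2)
    (h1 : H.Adj x1 y) (h2 : H.Adj x2 y)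
    (hy1 : j ≤ H.dist r1 y) (hy2 : j ≤ H.dist r2 y)
    (hx2lb : j - 1 ≤ H.dist r1 x2) : False := by
  obtain ⟨p1, hp1, hl1⟩ := hr1.exists_path_of_dist
  obtain ⟨p2, hp2, hl2⟩ := hr2.exists_path_of_dist
  have hy1' : y ∉ p1.support := by
    intro hmem
    have := dist_add_dist_le_of_mem_support p1 hmem
    omega
  have hy2' : y ∉ p2.support := by
    intro hmem
    have := dist_add_dist_le_of_mem_support p2 hmem
    omega
  have hw1 : (p1.concat h1).IsPath := concat_isPath hp1 h1 hy1'
  have hw2i : (p2.concat h2).IsPath := concat_isPath hp2 h2 hy2'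
  have hr1y : r1 ∉ (p2.concat h2).support := by
    intro hmem
    rw [Walk.concat_eq_append, Walk.mem_support_append_iff] at hmem
    rcases hmem with hmem | hmem
    · have := dist_add_dist_le_of_mem_support p2 hmem
      have hpos : 1 ≤ H.dist r2 r1 := (hrr.symm.reachable).pos_dist_of_ne hrr.ne'
      omega
    · simp only [Walk.support_cons, Walk.support_nil, List.mem_cons] at hmem
      rcases hmem with hmem | hmem
      · -- r1 = x2
        have e1 : 1 ≤ H.dist r2 x2 := by
          rw [← hmem]
          exact (hrr.symm.reachable).pos_dist_of_ne hrr.ne'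
        have e2 : H.dist r1 x2 = 0 := by rw [← hmem]; exact SimpleGraph.dist_self
        omega
      · rcases hmem with hmem | hmem
        · -- r1 = y
          have e2 : H.dist r1 y = 0 := by rw [← hmem]; exact SimpleGraph.dist_self
          omega
        · simp at hmem
  have hw2 : (Walk.cons hrr (p2.concat h2)).IsPath := hw2i.cons hr1y
  have hne : p1.concat h1 ≠ Walk.cons hrr (p2.concat h2) := by
    intro h
    have := congrArg Walk.length h
    rw [Walk.length_concat, Walk.length_cons, Walk.length_concat, hl1, hl2] at this
    omega
  have hbig := hg.two_paths hw1 hw2 hne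
  rw [Walk.length_concat, Walk.length_cons, Walk.length_concat, hl1, hl2] at hbig
  omega

/-- Mixed-roots same-level edge is impossible. -/
lemma same_level_mixed {gnat : ℕ} (hg : GirthGe H gnat) {r1 r2 x z : V} {j : ℕ}
    (hrr : H.Adj r1 r2) (hj : 1 ≤ j) (h2j : 2 * j + 3 ≤ gnat)
    (hx : H.dist r1 x = j) (hrx : H.Reachable r1 x)
    (hz : H.dist r2 z = j) (hrz : H.Reachable r2 z)
    (ha : H.Adj z x)
    (hx2 : j ≤ H.dist r2 x) (hz1 : j ≤ H.dist r1 z) : False := by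
  obtain ⟨p, hp, hlp⟩ := hrx.exists_path_of_dist
  obtain ⟨q, hq, hlq⟩ := hrz.exists_path_of_dist
  have hxq : x ∉ q.support := by
    intro hmem
    have := dist_add_dist_le_of_mem_support q hmem
    have hxz : 1 ≤ H.dist x z := by
      have hpos := (ha.symm.reachable).pos_dist_of_ne ha.ne'
      omega
    omega
  have hwi : (q.concat ha).IsPath := concat_isPath hq ha hxq
  have hr1m : r1 ∉ (q.concat ha).support := by
    intro hmem
    rw [Walk.concat_eq_append, Walk.mem_support_append_iff] at hmem
    rcases hmem with hmem | hmem
    · have := dist_add_dist_le_of_mem_support q hmem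
      have hpos : 1 ≤ H.dist r2 r1 := (hrr.symm.reachable).pos_dist_of_ne hrr.ne'
      omega
    · simp only [Walk.support_cons, Walk.support_nil, List.mem_cons] at hmem
      rcases hmem with hmem | hmem
      · -- r1 = z
        have e2 : H.dist r1 z = 0 := by rw [← hmem]; exact SimpleGraph.dist_self
        omega
      · rcases hmem with hmem | hmem
        · -- r1 = x
          have e2 : H.dist r1 x = 0 := by rw [← hmem]; exact SimpleGraph.dist_self
          omega
        · simp at hmem
  have hw : (Walk.cons hrr (q.concat ha)).IsPath := hwi.cons hr1m
  have hne : p ≠ Walk.cons hrr (q.concat ha) := by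
    intro h
    have := congrArg Walk.length h
    rw [Walk.length_cons, Walk.length_concat, hlp, hlq] at this
    omega
  have hbig := hg.two_paths hp hw hne
  rw [Walk.length_cons, Walk.length_concat, hlp, hlq] at hbig
  omega


end walks



/-- Geometric sum `∑_{i<k} (δ-1)^i` over `ℤ`. -/
def geom (δ k : ℕ) : ℤ := ∑ i ∈ Finset.range k, ((δ : ℤ) - 1) ^ i

lemma hd_nonneg {δ : ℕ} (hδ : 1 ≤ δ) : (0:ℤ) ≤ (δ : ℤ) - 1 := by
  have : (1:ℤ) ≤ (δ:ℤ) := by exact_mod_cast hδ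
  linarith

lemma geom_nonneg {δ : ℕ} (hδ : 1 ≤ δ) (k : ℕ) : 0 ≤ geom δ k := by
  apply Finset.sum_nonneg
  intro i _
  exact pow_nonneg (hd_nonneg hδ) i

lemma geom_succ (δ k : ℕ) : geom δ (k + 1) = 1 + ((δ : ℤ) - 1) * geom δ k := by
  unfold geom
  rw [Finset.sum_range_succ']
  rw [Finset.mul_sum]
  simp only [pow_zero]
  rw [add_comm]
  congr 1
  apply Finset.sum_congr rfl
  intro i _
  ring

lemma geom_mono {δ : ℕ} (hδ : 1 ≤ δ) {j k : ℕ} (h : j ≤ k) : geom δ j ≤ geom δ k := by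
  unfold geom
  apply Finset.sum_le_sum_of_subset_of_nonneg (Finset.range_subset_range.mpr h)
  intro i _ _
  exact pow_nonneg (hd_nonneg hδ) i

lemma arith (δ : ℕ) (hδ : 1 ≤ δ) : ∀ (T : ℕ) (K : ℤ) (s c : ℕ → ℤ),
    (∀ j, 0 ≤ c j) → K ≤ s 0 → (∀ j, j + 1 < T → ((δ:ℤ) - 1) * s j - c j ≤ s (j+1)) →
    K * geom δ T - geom δ (T-1) * (∑ j ∈ Finset.range (T-1), c j) ≤ ∑ j ∈ Finset.range T, s j := by
  intro T
  induction T with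
  | zero => intro K s c _ _ _; simp [geom]
  | succ T ih =>
    intro K s c hc h0 hrec
    rcases Nat.eq_zero_or_pos T with rfl | hT
    · simpa [geom] using h0
    · obtain ⟨m, rfl⟩ : ∃ m, T = m + 1 := ⟨T - 1, (Nat.succ_pred_eq_of_pos hT).symm⟩
      have hd : (0:ℤ) ≤ (δ:ℤ) - 1 := hd_nonneg hδ
      have ih' := ih (((δ:ℤ) - 1) * K - c 0) (fun j => s (j+1)) (fun j => c (j+1))
        (fun j => hc (j+1))
        (by
          have h1 := hrec 0 (by omega)
          have h2 : ((δ:ℤ) - 1) * K ≤ ((δ:ℤ) - 1) * s 0 := mul_le_mul_of_nonneg_left h0 hd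
          calc ((δ:ℤ) - 1) * K - c 0 ≤ ((δ:ℤ) - 1) * s 0 - c 0 := by linarith
            _ ≤ s (0+1) := h1
            _ = s 1 := rfl)
        (fun j hj => hrec (j+1) (by omega))
      have e1 : ∑ j ∈ Finset.range (m + 1 + 1), s j
          = s 0 + ∑ j ∈ Finset.range (m + 1), s (j + 1) := by
        rw [Finset.sum_range_succ']; ring
      have e2 : ∑ j ∈ Finset.range (m + 1), c j
          = c 0 + ∑ j ∈ Finset.range m, c (j + 1) := by
        rw [Finset.sum_range_succ']; ring
      have hgs : geom δ (m + 1 + 1) = 1 + ((δ:ℤ) - 1) * geom δ (m + 1) := geom_succ δ (m+1)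
      have hmono : geom δ m ≤ geom δ (m + 1) := geom_mono hδ (by omega)
      have hcs : (0:ℤ) ≤ ∑ j ∈ Finset.range m, c (j + 1) :=
        Finset.sum_nonneg fun j _ => hc (j+1)
      simp only [Nat.add_sub_cancel] at ih' ⊢
      rw [e1, e2, hgs]
      have hprod : 0 ≤ (geom δ (m+1) - geom δ m) * ∑ j ∈ Finset.range m, c (j + 1) :=
        mul_nonneg (by linarith) hcs
      nlinarith [ih', h0]


lemma exchange {V : Type*} [DecidableEq V] (H : SimpleGraph V) [DecidableRel H.Adj]
    (A B : Finset V) :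
    ∑ x ∈ A, ((B.filter (fun y => H.Adj x y)).card) = ∑ y ∈ B, ((A.filter (fun x => H.Adj x y)).card) := by
  simp only [Finset.card_filter]
  exact Finset.sum_comm

lemma layers {V : Type*} [Fintype V] [DecidableEq V] (H : SimpleGraph V) [DecidableRel H.Adj]
    (X : Finset V) (L : ℕ → Finset V) (c : V → ℕ) (δ T : ℕ) (ρ0 : ℤ)
    (hδ : 1 ≤ δ) (hT : 1 ≤ T)
    (hdisj : ∀ i j, i ≤ T → j ≤ T → i ≠ j → Disjoint (L i) (L j))
    (hsub : ∀ i, i ≤ T → L i ⊆ X)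
    (hstep0 : ∀ x ∈ L 0, ρ0 ≤ (((L 1).filter (fun y => H.Adj x y)).card : ℤ))
    (hstep : ∀ i, 1 ≤ i → i < T → ∀ x ∈ L i,
      (δ:ℤ) - 1 - (c x : ℤ) ≤ (((L (i+1)).filter (fun y => H.Adj x y)).card : ℤ))
    (hpar : ∀ i, i < T → ∀ y ∈ L (i+1), ((L i).filter (fun x => H.Adj x y)).card ≤ 1)
    (hbud : (∑ x ∈ X, (c x : ℤ)) ≤ (δ:ℤ) - 1)
    (hc : ∀ x, (0:ℤ) ≤ (c x : ℤ)) :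
    ((L 0).card : ℤ) + ((L 0).card : ℤ) * ρ0 * geom δ T - ((δ:ℤ) - 1) * geom δ (T-1)
      ≤ (X.card : ℤ) := by
  have key : ∀ i, i < T → ∑ x ∈ L i, ((L (i+1)).filter (fun y => H.Adj x y)).card
      ≤ (L (i+1)).card := by
    intro i hi
    rw [exchange]
    calc ∑ y ∈ L (i+1), ((L i).filter (fun x => H.Adj x y)).card
        ≤ ∑ _y ∈ L (i+1), 1 := Finset.sum_le_sum (hpar i hi)
      _ = (L (i+1)).card := by simp
  set s : ℕ → ℤ := fun j => ((L (j+1)).card : ℤ) with hs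
  set cseq : ℕ → ℤ := fun j => ∑ x ∈ L (j+1), (c x : ℤ) with hcseq
  have hs0 : ((L 0).card : ℤ) * ρ0 ≤ s 0 := by
    have h1 : ∑ x ∈ L 0, ρ0 ≤ ∑ x ∈ L 0, (((L 1).filter (fun y => H.Adj x y)).card : ℤ) :=
      Finset.sum_le_sum fun x hx => hstep0 x hx
    have h2 : ∑ x ∈ L 0, (((L 1).filter (fun y => H.Adj x y)).card : ℤ) ≤ s 0 := by
      have h := key 0 (by omega)
      have h2 : ((∑ x ∈ L 0, ((L 1).filter (fun y => H.Adj x y)).card : ℕ) : ℤ)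
          ≤ (((L 1).card : ℕ) : ℤ) := Nat.cast_le.mpr h
      push_cast at h2 ⊢
      simpa using h2
    calc ((L 0).card : ℤ) * ρ0 = ∑ _x ∈ L 0, ρ0 := by
          rw [Finset.sum_const, nsmul_eq_mul, mul_comm]
      _ ≤ _ := h1
      _ ≤ s 0 := h2
  have hrec : ∀ j, j + 1 < T → ((δ:ℤ) - 1) * s j - cseq j ≤ s (j+1) := by
    intro j hj
    have h1 : ∑ x ∈ L (j+1), ((δ:ℤ) - 1 - (c x : ℤ))
        ≤ ∑ x ∈ L (j+1), (((L (j+2)).filter (fun y => H.Adj x y)).card : ℤ) :=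
      Finset.sum_le_sum fun x hx => hstep (j+1) (by omega) (by omega) x hx
    have h2 : ∑ x ∈ L (j+1), (((L (j+2)).filter (fun y => H.Adj x y)).card : ℤ) ≤ s (j+1) := by
      have h := key (j+1) (by omega)
      have h2 : ((∑ x ∈ L (j+1), ((L (j+2)).filter (fun y => H.Adj x y)).card : ℕ) : ℤ)
          ≤ (((L (j+2)).card : ℕ) : ℤ) := Nat.cast_le.mpr h
      push_cast at h2 ⊢
      simpa using h2
    have h3 : ∑ x ∈ L (j+1), ((δ:ℤ) - 1 - (c x : ℤ)) = ((δ:ℤ) - 1) * s j - cseq j := by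
      rw [Finset.sum_sub_distrib, Finset.sum_const, nsmul_eq_mul]
      simp only [hs, hcseq]
      ring
    linarith
  have main := arith δ hδ T (((L 0).card : ℤ) * ρ0) s cseq
    (fun j => Finset.sum_nonneg fun x _ => hc x) hs0 hrec
  -- budget
  have hpd : (↑(Finset.range (T-1)) : Set ℕ).PairwiseDisjoint (fun j => L (j+1)) := by
    intro i hi j hj hij
    simp only [Finset.coe_range, Set.mem_Iio] at hi hj
    exact hdisj (i+1) (j+1) (by omega) (by omega) (by omega)
  have hbud' : ∑ j ∈ Finset.range (T-1), cseq j ≤ (δ:ℤ) - 1 := by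
    have e : ∑ j ∈ Finset.range (T-1), cseq j
        = ∑ x ∈ (Finset.range (T-1)).biUnion (fun j => L (j+1)), (c x : ℤ) :=
      (Finset.sum_biUnion hpd).symm
    rw [e]
    refine le_trans (Finset.sum_le_sum_of_subset_of_nonneg ?_ (fun x _ _ => hc x)) hbud
    intro x hx
    rw [Finset.mem_biUnion] at hx
    obtain ⟨j, hj, hxj⟩ := hx
    rw [Finset.mem_range] at hj
    exact hsub (j+1) (by omega) hxj
  -- cards
  have hpd2 : (↑(Finset.range (T+1)) : Set ℕ).PairwiseDisjoint L := by
    intro i hi j hj hij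
    simp only [Finset.coe_range, Set.mem_Iio] at hi hj
    exact hdisj i j (by omega) (by omega) hij
  have hcard : ∑ j ∈ Finset.range (T+1), ((L j).card : ℤ) ≤ (X.card : ℤ) := by
    have e : ∑ j ∈ Finset.range (T+1), (L j).card
        = ((Finset.range (T+1)).biUnion L).card := (Finset.card_biUnion hpd2).symm
    have hsubX : (Finset.range (T+1)).biUnion L ⊆ X := by
      intro x hx
      rw [Finset.mem_biUnion] at hx
      obtain ⟨j, hj, hxj⟩ := hx
      rw [Finset.mem_range] at hj
      exact hsub j (by omega) hxj
    have := Finset.card_le_card hsubX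
    exact_mod_cast le_trans (le_of_eq (by exact_mod_cast e)) (Nat.cast_le.mpr this)
  have hsplit : ∑ j ∈ Finset.range (T+1), ((L j).card : ℤ)
      = ((L 0).card : ℤ) + ∑ j ∈ Finset.range T, s j := by
    rw [Finset.sum_range_succ']
    simp only [hs]
    ring
  have hgeomnn : 0 ≤ geom δ (T-1) := geom_nonneg hδ (T-1)
  have hfin : geom δ (T-1) * (∑ j ∈ Finset.range (T-1), cseq j)
      ≤ geom δ (T-1) * ((δ:ℤ) - 1) := mul_le_mul_of_nonneg_left hbud' hgeomnn
  have := hsplit ▸ hcard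
  nlinarith [main, hfin, this]

lemma geom_succ_top (δ k : ℕ) : geom δ (k + 1) = geom δ k + ((δ:ℤ) - 1) ^ k := by
  unfold geom
  rw [Finset.sum_range_succ]

lemma odd_eval (δ : ℕ) (hδ : 2 ≤ δ) : ∀ t : ℕ, 1 ≤ t →
    ((1 + δ + ∑ i ∈ Finset.Icc 2 t, (δ-1)^i : ℕ) : ℤ)
      = 1 + (δ:ℤ) * geom δ t - ((δ:ℤ)-1) * geom δ (t-1) := by
  have hcast : ((δ - 1 : ℕ) : ℤ) = (δ:ℤ) - 1 := by
    rw [Nat.cast_sub (by omega)]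
    norm_num
  intro t ht
  induction t, ht using Nat.le_induction with
  | base =>
    rw [show Finset.Icc 2 1 = (∅ : Finset ℕ) from rfl]
    simp [geom]
  | succ t ht ih =>
    obtain ⟨m, rfl⟩ : ∃ m, t = m + 1 := ⟨t - 1, by omega⟩
    have hsum : ∑ i ∈ Finset.Icc 2 (m+1+1), (δ-1)^i
        = (∑ i ∈ Finset.Icc 2 (m+1), (δ-1)^i) + (δ-1)^(m+1+1) :=
      Finset.sum_Icc_succ_top (by omega) _
    rw [hsum]
    push_cast [hcast] at ih ⊢
    rw [geom_succ_top δ (m+1)]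
    rw [geom_succ_top δ m] at ih ⊢
    linear_combination ih

lemma even_eval (δ : ℕ) (hδ : 2 ≤ δ) : ∀ t : ℕ, 1 ≤ t →
    ((2 + 2*(δ-1)^t + ∑ i ∈ Finset.Icc 1 (t-1), (δ-1)^i : ℕ) : ℤ)
      = 2 + 2*((δ:ℤ)-1) * geom δ t - ((δ:ℤ)-1) * geom δ (t-1) := by
  have hcast : ((δ - 1 : ℕ) : ℤ) = (δ:ℤ) - 1 := by
    rw [Nat.cast_sub (by omega)]
    norm_num
  intro t ht
  induction t, ht using Nat.le_induction with
  | base =>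
    rw [show (1:ℕ) - 1 = 0 from rfl, show Finset.Icc 1 0 = (∅ : Finset ℕ) from rfl]
    push_cast [hcast]
    norm_num [geom, Finset.sum_range_one]
  | succ t ht ih =>
    obtain ⟨m, rfl⟩ : ∃ m, t = m + 1 := ⟨t - 1, by omega⟩
    rw [show (m+1+1) - 1 = (m+1) from rfl]
    have hsum : ∑ i ∈ Finset.Icc 1 (m+1), (δ-1)^i
        = (∑ i ∈ Finset.Icc 1 m, (δ-1)^i) + (δ-1)^(m+1) :=
      Finset.sum_Icc_succ_top (by omega) _
    rw [hsum]
    rw [show (m+1) - 1 = m from rfl] at ih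
    push_cast [hcast] at ih ⊢
    rw [geom_succ_top δ (m+1)]
    rw [geom_succ_top δ m] at ih ⊢
    linear_combination ih


/-- The subgraph of `G` induced on `X`, as a graph on the same vertex set. -/
def indG {V : Type*} [DecidableEq V] (G : SimpleGraph V) (X : Finset V) : SimpleGraph V where
  Adj a b := G.Adj a b ∧ a ∈ X ∧ b ∈ X
  symm := ⟨fun a b h => ⟨h.1.symm, h.2.2, h.2.1⟩⟩
  loopless := ⟨fun a h => G.loopless.irrefl a h.1⟩

instance {V : Type*} [DecidableEq V] (G : SimpleGraph V) [DecidableRel G.Adj] (X : Finset V) :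
    DecidableRel (indG G X).Adj :=
  fun a b => inferInstanceAs (Decidable (G.Adj a b ∧ a ∈ X ∧ b ∈ X))

lemma indG_adj {V : Type*} [DecidableEq V] {G : SimpleGraph V} {X : Finset V} {a b : V} :
    (indG G X).Adj a b ↔ G.Adj a b ∧ a ∈ X ∧ b ∈ X := Iff.rfl

lemma indG_le {V : Type*} [DecidableEq V] (G : SimpleGraph V) (X : Finset V) :
    indG G X ≤ G := fun _ _ h => h.1

end StmtAux

open StmtAux in
theorem stmt6 {V : Type*} [Fintype V] [DecidableEq V] (G : SimpleGraph V) [DecidableRel G.Adj]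
    (g δ : ℕ) (hδ : 2 ≤ δ) (hg : 3 ≤ g)
    (hmin : G.minDegree = δ) (hgirth : G.egirth = (g : ℕ∞))
    (X : Finset V) (hX : X.Nonempty) (hcut : cutSize G X < δ) :
    nOneStar δ g ≤ X.card := by
  classical
  have hδ1 : 1 ≤ δ := by omega
  set H : SimpleGraph V := indG G X with hHdef
  have hHG : H ≤ G := indG_le G X
  have hgirthH : GirthGe H g := by
    intro x cw hc
    have hc' : (cw.mapLe hHG).IsCycle := hc.mapLe hHG
    have h1 : G.egirth ≤ ((cw.mapLe hHG).length : ℕ∞) := SimpleGraph.le_egirth.mp le_rfl _ _ hc'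
    rw [hgirth] at h1
    have hlen : (cw.mapLe hHG).length = cw.length := SimpleGraph.Walk.length_map cw (f := SimpleGraph.Hom.ofLE hHG)
    rw [hlen] at h1
    exact_mod_cast h1
  set cfun : V → ℕ := fun x => (G.neighborFinset x \ X).card with hcdef
  have hcut_eq : ∑ x ∈ X, cfun x = cutSize G X := by
    unfold cutSize edgesBetween
    rw [Finset.card_filter, Finset.sum_product]
    apply Finset.sum_congr rfl
    intro x _
    rw [show (∑ y ∈ Xᶜ, if G.Adj x y then 1 else 0) = (Xᶜ.filter (fun y => G.Adj x y)).card from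
      (Finset.card_filter _ _).symm]
    have hset : Xᶜ.filter (fun y => G.Adj x y) = G.neighborFinset x \ X := by
      ext y
      simp only [Finset.mem_filter, Finset.mem_compl, Finset.mem_sdiff,
        SimpleGraph.mem_neighborFinset]
      tauto
    rw [hset]
  have hbud : ∑ x ∈ X, cfun x ≤ δ - 1 := by rw [hcut_eq]; omega
  have hbudZ : (∑ x ∈ X, (cfun x : ℤ)) ≤ (δ:ℤ) - 1 := by
    have h : ((∑ x ∈ X, cfun x : ℕ) : ℤ) ≤ ((δ - 1 : ℕ) : ℤ) := Nat.cast_le.mpr hbud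
    rw [Nat.cast_sub hδ1] at h
    push_cast at h
    exact h
  haveI : Nonempty V := ⟨hX.choose⟩
  have hdeg : ∀ x, δ ≤ G.degree x := fun x => hmin ▸ G.minDegree_le_degree x
  have hnbrH : ∀ x ∈ X, H.neighborFinset x = G.neighborFinset x ∩ X := by
    intro x hx
    ext y
    simp only [SimpleGraph.mem_neighborFinset, Finset.mem_inter, hHdef, indG_adj]
    tauto
  have hdegH : ∀ x ∈ X, H.degree x + cfun x = G.degree x := by
    intro x hx
    rw [SimpleGraph.degree, SimpleGraph.degree, hnbrH x hx, hcdef]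
    exact Finset.card_inter_add_card_sdiff _ _
  have hXcard : δ + 1 ≤ X.card := by
    by_contra hlt
    push_neg at hlt
    have hb : ∀ x ∈ X, δ + 1 ≤ X.card + cfun x := by
      intro x hx
      have hsubE : H.neighborFinset x ⊆ X.erase x := by
        intro y hy
        rw [hnbrH x hx, Finset.mem_inter] at hy
        rw [Finset.mem_erase]
        refine ⟨?_, hy.2⟩
        intro h
        subst h
        exact G.loopless.irrefl y ((SimpleGraph.mem_neighborFinset _ _ _).mp hy.1)
      have h1 : H.degree x ≤ X.card - 1 := by
        calc H.degree x ≤ (X.erase x).card := Finset.card_le_card hsubE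
          _ = X.card - 1 := Finset.card_erase_of_mem hx
      have h2 := hdegH x hx
      have h3 := hdeg x
      have h4 : 1 ≤ X.card := Finset.card_pos.mpr hX
      omega
    have hsum := Finset.sum_le_sum hb
    rw [Finset.sum_const, smul_eq_mul, Finset.sum_add_distrib, Finset.sum_const,
      smul_eq_mul] at hsum
    have h5 : X.card * (δ + 1) ≤ X.card * X.card + (δ - 1) := by omega
    have h6 : 1 ≤ X.card := Finset.card_pos.mpr hX
    have h7 : ((X.card : ℤ)) * ((δ:ℤ) + 1) ≤ (X.card : ℤ) * X.card + ((δ:ℤ) - 1) := by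
      have h : ((X.card * (δ + 1) : ℕ) : ℤ) ≤ ((X.card * X.card + (δ - 1) : ℕ) : ℤ) :=
        Nat.cast_le.mpr h5
      rw [Nat.cast_add, Nat.cast_sub hδ1] at h
      push_cast at h
      linarith
    have h8 : (1:ℤ) ≤ (X.card : ℤ) := by exact_mod_cast h6
    have h9 : (X.card : ℤ) ≤ (δ:ℤ) := by exact_mod_cast (by omega : X.card ≤ δ)
    nlinarith [mul_nonneg (by linarith : (0:ℤ) ≤ (X.card:ℤ) - 1)
      (by linarith : (0:ℤ) ≤ (δ:ℤ) - (X.card:ℤ))]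
  have hdirty : (X.filter fun x => cfun x ≠ 0).card ≤ δ - 1 := by
    calc (X.filter fun x => cfun x ≠ 0).card
        = ∑ _x ∈ X.filter fun x => cfun x ≠ 0, 1 := by simp
      _ ≤ ∑ x ∈ X.filter fun x => cfun x ≠ 0, cfun x :=
          Finset.sum_le_sum fun x hx => by
            have := (Finset.mem_filter.mp hx).2
            omega
      _ ≤ ∑ x ∈ X, cfun x := Finset.sum_le_sum_of_subset (Finset.filter_subset _ _)
      _ ≤ δ - 1 := hbud
  obtain ⟨v, hvX, hvclean⟩ : ∃ v ∈ X, cfun v = 0 := by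
    have h1 : (X.filter fun x => cfun x ≠ 0).card < X.card := by omega
    obtain ⟨v, hv1, hv2⟩ := Finset.exists_of_ssubset
      ((Finset.filter_subset _ _).ssubset_of_ne (fun he => by rw [he] at h1; omega))
    refine ⟨v, hv1, ?_⟩
    by_contra hc0
    exact hv2 (Finset.mem_filter.mpr ⟨hv1, hc0⟩)
  have hvnbrX : G.neighborFinset v ⊆ X := by
    intro y hy
    by_contra hyX
    have hmem : y ∈ G.neighborFinset v \ X := Finset.mem_sdiff.mpr ⟨hy, hyX⟩
    have : (G.neighborFinset v \ X) = ∅ := Finset.card_eq_zero.mp hvclean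
    rw [this] at hmem
    exact absurd hmem (Finset.notMem_empty _)
  have hvnbr : H.neighborFinset v = G.neighborFinset v := by
    rw [hnbrH v hvX]
    exact Finset.inter_eq_left.mpr hvnbrX
  have hdist0 : ∀ {x y : V}, H.Reachable x y → H.dist x y = 0 → x = y := by
    intro x y hr h0
    obtain ⟨p, _, hl⟩ := hr.exists_path_of_dist
    exact SimpleGraph.Walk.eq_of_length_eq_zero (by rw [hl, h0])
  have hcast : ∀ (a b : ℕ), a ≤ b → ((a : ℤ) ≤ (b : ℤ)) := fun a b h => Nat.cast_le.mpr h
  -- parity split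
  rcases Nat.even_or_odd g with hgeven | hgodd
  · -- EVEN case
    have hgm : g % 2 = 0 := Nat.even_iff.mp hgeven
    set t : ℕ := (g - 1) / 2 with htdef
    have hgt : g = 2 * t + 2 := by omega
    have ht1 : 1 ≤ t := by omega
    -- find a clean neighbor u of v
    have hvdeg : δ ≤ (G.neighborFinset v).card := hdeg v
    obtain ⟨u, huNv, hunotdirty⟩ :
        ∃ u ∈ G.neighborFinset v, u ∉ X.filter fun x => cfun x ≠ 0 := by
      by_contra hcon
      push_neg at hcon
      have : G.neighborFinset v ⊆ X.filter fun x => cfun x ≠ 0 := hcon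
      have := Finset.card_le_card this
      omega
    have huX : u ∈ X := hvnbrX huNv
    have hucfun : cfun u = 0 := by
      by_contra hc0
      exact hunotdirty (Finset.mem_filter.mpr ⟨huX, hc0⟩)
    have hunbrX : G.neighborFinset u ⊆ X := by
      intro y hy
      by_contra hyX
      have hmem : y ∈ G.neighborFinset u \ X := Finset.mem_sdiff.mpr ⟨hy, hyX⟩
      have : (G.neighborFinset u \ X) = ∅ := Finset.card_eq_zero.mp hucfun
      rw [this] at hmem
      exact absurd hmem (Finset.notMem_empty _)
    have hunbr : H.neighborFinset u = G.neighborFinset u := by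
      rw [hnbrH u huX]
      exact Finset.inter_eq_left.mpr hunbrX
    have hadjvu : H.Adj v u := ⟨(SimpleGraph.mem_neighborFinset _ _ _).mp huNv, hvX, huX⟩
    have hne_vu : v ≠ u := hadjvu.ne
    have hreachu : ∀ {x : V}, H.Reachable v x → H.Reachable u x :=
      fun hx => (hadjvu.symm.reachable).trans hx
    set D : V → ℕ := fun x => min (H.dist v x) (H.dist u x) with hDdef
    have hDlb : ∀ x i, D x = i → i ≤ H.dist v x ∧ i ≤ H.dist u x := by
      intro x i h
      rw [hDdef] at h
      constructor
      · calc i = min (H.dist v x) (H.dist u x) := h.symm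
          _ ≤ H.dist v x := min_le_left _ _
      · calc i = min (H.dist v x) (H.dist u x) := h.symm
          _ ≤ H.dist u x := min_le_right _ _
    have hDcases : ∀ x i, D x = i → H.dist v x = i ∨ H.dist u x = i := by
      intro x i h
      rw [hDdef] at h
      rcases min_cases (H.dist v x) (H.dist u x) with ⟨he, _⟩ | ⟨he, _⟩
      · exact Or.inl (he ▸ h)
      · exact Or.inr (he ▸ h)
    set L : ℕ → Finset V := fun i => X.filter (fun x => H.Reachable v x ∧ D x = i) with hLdef
    have hmemL : ∀ i x, x ∈ L i ↔ x ∈ X ∧ H.Reachable v x ∧ D x = i := by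
      intro i x
      rw [hLdef]
      exact Finset.mem_filter
    have hdisjL : ∀ i j, i ≤ t → j ≤ t → i ≠ j → Disjoint (L i) (L j) := by
      intro i j _ _ hij
      rw [Finset.disjoint_left]
      intro a hai haj
      rw [hmemL] at hai haj
      have e1 := hai.2.2
      have e2 := haj.2.2
      omega
    have hsubL : ∀ i, i ≤ t → L i ⊆ X := fun i _ => Finset.filter_subset _ _
    -- level 0
    have hL0 : L 0 = {v, u} := by
      ext x
      rw [hmemL]
      constructor
      · rintro ⟨hxX, hrx, hD0⟩
        rcases hDcases x 0 hD0 with h | h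
        · exact Finset.mem_insert.mpr (Or.inl (hdist0 hrx h).symm)
        · exact Finset.mem_insert.mpr (Or.inr (Finset.mem_singleton.mpr
            (hdist0 (hreachu hrx) h).symm))
      · intro hx
        rcases Finset.mem_insert.mp hx with rfl | hx
        · refine ⟨hvX, SimpleGraph.Reachable.refl _, ?_⟩
          rw [hDdef]
          simp [SimpleGraph.dist_self]
        · rw [Finset.mem_singleton] at hx
          subst hx
          refine ⟨huX, hadjvu.reachable, ?_⟩
          rw [hDdef]
          simp [SimpleGraph.dist_self]
    have hL0card : (L 0).card = 2 := by rw [hL0]; exact Finset.card_pair hne_vu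
    -- parent uniqueness at level j ≤ t
    have hparent : ∀ j, 1 ≤ j → j ≤ t → ∀ y, D y = j → ∀ x1 x2, H.Adj x1 y → H.Adj x2 y →
        H.Reachable v x1 → D x1 = j - 1 → H.Reachable v x2 → D x2 = j - 1 → x1 = x2 := by
      intro j hj1 hjt y hDy x1 x2 ha1 ha2 hr1 hd1 hr2 hd2
      obtain ⟨hv1, hu1⟩ := hDlb x1 _ hd1
      obtain ⟨hv2, hu2⟩ := hDlb x2 _ hd2
      obtain ⟨hvy, huy⟩ := hDlb y _ hDy
      rcases hDcases x1 _ hd1 with h1 | h1 <;> rcases hDcases x2 _ hd2 with h2 | h2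
      · exact parent_unique_root hgirthH hj1 (by omega) hvy ha1 ha2 h1 h2 hr1 hr2
      · exact (parent_mixed hgirthH hadjvu hj1 (by omega) h1 hr1 h2 (hreachu hr2)
          ha1 ha2 hvy huy hv2).elim
      · exact (parent_mixed hgirthH hadjvu.symm hj1 (by omega) h1 (hreachu hr1) h2 hr2
          ha1 ha2 huy hvy hu2).elim
      · exact parent_unique_root hgirthH hj1 (by omega) huy ha1 ha2 h1 h2
          (hreachu hr1) (hreachu hr2)
    -- no same-level edges at levels 1..t-1
    have hsamelevel : ∀ j, 1 ≤ j → j ≤ t - 1 → ∀ x z, H.Reachable v x → D x = j →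
        H.Reachable v z → D z = j → H.Adj z x → False := by
      intro j hj1 hjt x z hrx hDx hrz hDz hazx
      obtain ⟨hvx, hux⟩ := hDlb x _ hDx
      obtain ⟨hvz, huz⟩ := hDlb z _ hDz
      rcases hDcases x _ hDx with h1 | h1 <;> rcases hDcases z _ hDz with h2 | h2
      · exact no_same_level_root hgirthH (by omega) h1 (le_of_eq h1.symm) h2 hrx hrz hazx
      · exact same_level_mixed hgirthH hadjvu hj1 (by omega) h1 hrx h2 (hreachu hrz)
          hazx hux hvz
      · exact same_level_mixed hgirthH hadjvu.symm hj1 (by omega) h1 (hreachu hrx) h2 hrz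
          hazx hvx huz
      · exact no_same_level_root hgirthH (by omega) h1 (le_of_eq h1.symm) h2
          (hreachu hrx) (hreachu hrz) hazx
    -- step 0
    have hstep0 : ∀ x ∈ L 0, ((δ:ℤ) - 1) ≤ (((L 1).filter (fun y => H.Adj x y)).card : ℤ) := by
      intro x hx0
      rw [hL0] at hx0
      have hkey : ∀ (r r' : V), r ∈ X → cfun r = 0 → H.neighborFinset r = G.neighborFinset r →
          H.Reachable v r → D r = 0 → (∀ y, H.Adj r y → H.Reachable v y) →
          ({v, u} : Finset V) = {r, r'} →
          ((δ:ℤ) - 1) ≤ (((L 1).filter (fun y => H.Adj r y)).card : ℤ) := by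
        intro r r' hrX hrclean hrnbr hrreach hD0 hradj hset
        have hsub2 : (H.neighborFinset r).erase r' ⊆ (L 1).filter (fun y => H.Adj r y) := by
          intro y hy
          obtain ⟨hyr', hyN⟩ := Finset.mem_erase.mp hy
          have hadj : H.Adj r y := (SimpleGraph.mem_neighborFinset _ _ _).mp hyN
          have hyX : y ∈ X := hadj.2.2
          have hry : H.Reachable v y := hradj y hadj
          have hD1 : D y ≤ 1 := by
            have h1 : H.dist r y ≤ 1 := by
              have := dist_le_of_adj (H := H) (SimpleGraph.Reachable.refl r) hadj
              rw [SimpleGraph.dist_self] at this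
              omega
            have h2 : r = v ∨ r = u := by
              have : r ∈ ({v, u} : Finset V) := by rw [hset]; exact Finset.mem_insert_self _ _
              simpa using this
            rcases h2 with rfl | rfl
            · calc D y ≤ H.dist r y := (min_le_left _ _)
                _ ≤ 1 := h1
            · calc D y ≤ H.dist r y := (min_le_right _ _)
                _ ≤ 1 := h1
          have hDne0 : D y ≠ 0 := by
            intro h0
            have hyvu : y = v ∨ y = u := by
              rcases hDcases y 0 h0 with h | h
              · exact Or.inl (hdist0 hry h).symm
              · exact Or.inr (hdist0 (hreachu hry) h).symm
            have hymem : y ∈ ({v, u} : Finset V) := by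
              rcases hyvu with rfl | rfl
              · exact Finset.mem_insert_self _ _
              · exact Finset.mem_insert_of_mem (Finset.mem_singleton_self _)
            rw [hset] at hymem
            rcases Finset.mem_insert.mp hymem with h | h
            · exact hadj.ne' h
            · exact hyr' (Finset.mem_singleton.mp h)
          refine Finset.mem_filter.mpr ⟨(hmemL 1 y).mpr ⟨hyX, hry, by omega⟩, hadj⟩
        have hcard2 : δ - 1 ≤ ((L 1).filter (fun y => H.Adj r y)).card := by
          calc δ - 1 ≤ G.degree r - 1 := by have := hdeg r; omega
            _ = (H.neighborFinset r).card - 1 := by rw [hrnbr]; rfl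
            _ ≤ ((H.neighborFinset r).erase r').card := by
                rcases Finset.decidableMem r' (H.neighborFinset r) with h | h
                · rw [Finset.erase_eq_of_notMem h]; omega
                · rw [Finset.card_erase_of_mem h]
            _ ≤ _ := Finset.card_le_card hsub2
        have := hcast _ _ hcard2
        rw [Nat.cast_sub hδ1] at this
        push_cast at this
        linarith
      rcases Finset.mem_insert.mp hx0 with rfl | hx0
      · exact hkey x u hvX hvclean hvnbr (SimpleGraph.Reachable.refl _) (by
          rw [hDdef]; simp [SimpleGraph.dist_self])
          (fun y hy => hy.reachable) rfl
      · rw [Finset.mem_singleton] at hx0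
        subst hx0
        exact hkey x v huX hucfun hunbr hadjvu.reachable (by
          rw [hDdef]; simp [SimpleGraph.dist_self])
          (fun y hy => hadjvu.reachable.trans hy.reachable) (by
            ext z; simp [Finset.mem_insert, Finset.mem_singleton]; tauto)
    -- main step
    have hstep : ∀ i, 1 ≤ i → i < t → ∀ x ∈ L i,
        (δ:ℤ) - 1 - (cfun x : ℤ) ≤ (((L (i+1)).filter (fun y => H.Adj x y)).card : ℤ) := by
      intro i hi1 hit x hx
      obtain ⟨hxX, hrx, hdx⟩ := (hmemL i x).mp hx
      set N := H.neighborFinset x with hN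
      have hNadj : ∀ {y}, y ∈ N → H.Adj x y := fun hy => (SimpleGraph.mem_neighborFinset _ _ _).mp hy
      have hNsub : N ⊆ (L (i-1) ∪ L i) ∪ L (i+1) := by
        intro y hy
        have hadj : H.Adj x y := hNadj hy
        have hyX : y ∈ X := hadj.2.2
        have hry : H.Reachable v y := hrx.trans hadj.reachable
        have hub : D y ≤ i + 1 := by
          rcases hDcases x _ hdx with h | h
          · have := dist_le_of_adj hrx hadj
            calc D y ≤ H.dist v y := min_le_left _ _
              _ ≤ i + 1 := by omega
          · have := dist_le_of_adj (hreachu hrx) hadj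
            calc D y ≤ H.dist u y := min_le_right _ _
              _ ≤ i + 1 := by omega
        have hlb : i ≤ D y + 1 := by
          rcases hDcases y (D y) rfl with h | h
          · have := dist_le_of_adj hry hadj.symm
            have h2 : i ≤ H.dist v x := (hDlb x i hdx).1
            omega
          · have := dist_le_of_adj (hreachu hry) hadj.symm
            have h2 : i ≤ H.dist u x := (hDlb x i hdx).2
            omega
        have : D y = i - 1 ∨ D y = i ∨ D y = i + 1 := by omega
        rcases this with h | h | h
        · exact Finset.mem_union_left _ (Finset.mem_union_left _ ((hmemL _ y).mpr ⟨hyX, hry, h⟩))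
        · exact Finset.mem_union_left _ (Finset.mem_union_right _ ((hmemL _ y).mpr ⟨hyX, hry, h⟩))
        · exact Finset.mem_union_right _ ((hmemL _ y).mpr ⟨hyX, hry, h⟩)
      have hnotLi : ∀ z ∈ N, z ∉ L i := by
        intro z hz hzL
        obtain ⟨hzX, hrz, hdz⟩ := (hmemL i z).mp hzL
        exact hsamelevel i hi1 (by omega) x z hrx hdx hrz hdz (hNadj hz).symm
      have hcap : (N ∩ (L (i-1) ∪ L i)).card ≤ 1 := by
        rw [Finset.card_le_one]
        intro a ha b hb
        obtain ⟨haN, haU⟩ := Finset.mem_inter.mp ha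
        obtain ⟨hbN, hbU⟩ := Finset.mem_inter.mp hb
        have haL : a ∈ L (i-1) := by
          rcases Finset.mem_union.mp haU with h | h
          · exact h
          · exact absurd h (hnotLi a haN)
        have hbL : b ∈ L (i-1) := by
          rcases Finset.mem_union.mp hbU with h | h
          · exact h
          · exact absurd h (hnotLi b hbN)
        obtain ⟨haX, hra, hda⟩ := (hmemL _ a).mp haL
        obtain ⟨hbX, hrb, hdb⟩ := (hmemL _ b).mp hbL
        exact hparent i hi1 (by omega) x hdx a b (hNadj haN).symm (hNadj hbN).symm
          hra hda hrb hdb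
      have hNcard : N.card ≤ 1 + (N ∩ L (i+1)).card := by
        have h1 : N ⊆ (N ∩ (L (i-1) ∪ L i)) ∪ (N ∩ L (i+1)) := by
          intro y hy
          rcases Finset.mem_union.mp (hNsub hy) with h | h
          · exact Finset.mem_union_left _ (Finset.mem_inter.mpr ⟨hy, h⟩)
          · exact Finset.mem_union_right _ (Finset.mem_inter.mpr ⟨hy, h⟩)
        calc N.card ≤ _ := Finset.card_le_card h1
          _ ≤ (N ∩ (L (i-1) ∪ L i)).card + (N ∩ L (i+1)).card := Finset.card_union_le _ _
          _ ≤ 1 + (N ∩ L (i+1)).card := by omega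
      have hfilt : (L (i+1)).filter (fun y => H.Adj x y) = N ∩ L (i+1) := by
        ext y
        simp only [Finset.mem_filter, Finset.mem_inter, hN, SimpleGraph.mem_neighborFinset]
        tauto
      have hd1 : δ ≤ N.card + cfun x := by
        have e1 := hdegH x hxX
        have e2 := hdeg x
        have e3 : H.degree x = N.card := rfl
        omega
      rw [hfilt]
      have hfin : δ ≤ 1 + (N ∩ L (i+1)).card + cfun x := by omega
      have hZ := hcast _ _ hfin
      push_cast at hZ
      linarith
    -- parent count
    have hpar : ∀ i, i < t → ∀ y ∈ L (i+1), ((L i).filter (fun x => H.Adj x y)).card ≤ 1 := by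
      intro i hit y hy
      obtain ⟨hyX, hry, hdy⟩ := (hmemL (i+1) y).mp hy
      rw [Finset.card_le_one]
      intro a ha b hb
      obtain ⟨haL, hadja⟩ := Finset.mem_filter.mp ha
      obtain ⟨hbL, hadjb⟩ := Finset.mem_filter.mp hb
      obtain ⟨haX, hra, hda⟩ := (hmemL i a).mp haL
      obtain ⟨hbX, hrb, hdb⟩ := (hmemL i b).mp hbL
      exact hparent (i+1) (by omega) (by omega) y hdy a b hadja hadjb hra (by omega) hrb (by omega)
    have main := layers H X L cfun δ t ((δ:ℤ) - 1) hδ1 ht1 hdisjL hsubL hstep0 hstep hpar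
      hbudZ (fun x => Int.natCast_nonneg _)
    rw [hL0card] at main
    have heval := even_eval δ hδ t ht1
    have hfinal : ((nOneStar δ g : ℕ) : ℤ) ≤ (X.card : ℤ) := by
      have : nOneStar δ g = 2 + 2*(δ-1)^t + ∑ i ∈ Finset.Icc 1 (t-1), (δ-1)^i := by
        unfold nOneStar
        rw [if_neg (by omega), ← htdef]
      rw [this, heval]
      push_cast at main ⊢
      linarith
    exact_mod_cast hfinal
  · -- ODD case
    have hgm : g % 2 = 1 := Nat.odd_iff.mp hgodd
    set t : ℕ := (g - 1) / 2 with htdef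
    have hgt : g = 2 * t + 1 := by omega
    have ht1 : 1 ≤ t := by omega
    set L : ℕ → Finset V := fun i => X.filter (fun x => H.Reachable v x ∧ H.dist v x = i)
      with hLdef
    have hmemL : ∀ i x, x ∈ L i ↔ x ∈ X ∧ H.Reachable v x ∧ H.dist v x = i := by
      intro i x
      rw [hLdef]
      exact Finset.mem_filter
    have hdisjL : ∀ i j, i ≤ t → j ≤ t → i ≠ j → Disjoint (L i) (L j) := by
      intro i j _ _ hij
      rw [Finset.disjoint_left]
      intro a hai haj
      rw [hmemL] at hai haj
      have e1 := hai.2.2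
      have e2 := haj.2.2
      omega
    have hsubL : ∀ i, i ≤ t → L i ⊆ X := fun i _ => Finset.filter_subset _ _
    have hL0 : L 0 = {v} := by
      ext x
      rw [hmemL, Finset.mem_singleton]
      constructor
      · rintro ⟨hxX, hrx, hd0⟩
        exact (hdist0 hrx hd0).symm
      · rintro rfl
        exact ⟨hvX, SimpleGraph.Reachable.refl _, SimpleGraph.dist_self⟩
    have hL0card : (L 0).card = 1 := by rw [hL0]; exact Finset.card_singleton _
    have hstep0 : ∀ x ∈ L 0, ((δ:ℤ)) ≤ (((L 1).filter (fun y => H.Adj x y)).card : ℤ) := by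
      intro x hx0
      rw [hL0, Finset.mem_singleton] at hx0
      subst hx0
      have hsub2 : H.neighborFinset x ⊆ (L 1).filter (fun y => H.Adj x y) := by
        intro y hy
        have hadj : H.Adj x y := (SimpleGraph.mem_neighborFinset _ _ _).mp hy
        have hyX : y ∈ X := hadj.2.2
        have hd1 : H.dist x y = 1 := by
          have h1 : H.dist x y ≤ 1 := by
            have := dist_le_of_adj (H := H) (SimpleGraph.Reachable.refl x) hadj
            rw [SimpleGraph.dist_self] at this
            omega
          have h2 : 1 ≤ H.dist x y := hadj.reachable.pos_dist_of_ne hadj.ne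
          omega
        exact Finset.mem_filter.mpr ⟨(hmemL 1 y).mpr ⟨hyX, hadj.reachable, hd1⟩, hadj⟩
      have hcard2 : δ ≤ ((L 1).filter (fun y => H.Adj x y)).card := by
        calc δ ≤ G.degree x := hdeg x
          _ = (H.neighborFinset x).card := by rw [hvnbr]; rfl
          _ ≤ _ := Finset.card_le_card hsub2
      exact_mod_cast hcast _ _ hcard2
    have hstep : ∀ i, 1 ≤ i → i < t → ∀ x ∈ L i,
        (δ:ℤ) - 1 - (cfun x : ℤ) ≤ (((L (i+1)).filter (fun y => H.Adj x y)).card : ℤ) := by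
      intro i hi1 hit x hx
      obtain ⟨hxX, hrx, hdx⟩ := (hmemL i x).mp hx
      set N := H.neighborFinset x with hN
      have hNadj : ∀ {y}, y ∈ N → H.Adj x y := fun hy => (SimpleGraph.mem_neighborFinset _ _ _).mp hy
      have hNsub : N ⊆ (L (i-1) ∪ L i) ∪ L (i+1) := by
        intro y hy
        have hadj : H.Adj x y := hNadj hy
        have hyX : y ∈ X := hadj.2.2
        have hry : H.Reachable v y := hrx.trans hadj.reachable
        have hub : H.dist v y ≤ i + 1 := by
          have := dist_le_of_adj hrx hadj
          omega
        have hlb : i ≤ H.dist v y + 1 := by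
          have := dist_le_of_adj hry hadj.symm
          omega
        have : H.dist v y = i - 1 ∨ H.dist v y = i ∨ H.dist v y = i + 1 := by omega
        rcases this with h | h | h
        · exact Finset.mem_union_left _ (Finset.mem_union_left _ ((hmemL _ y).mpr ⟨hyX, hry, h⟩))
        · exact Finset.mem_union_left _ (Finset.mem_union_right _ ((hmemL _ y).mpr ⟨hyX, hry, h⟩))
        · exact Finset.mem_union_right _ ((hmemL _ y).mpr ⟨hyX, hry, h⟩)
      have hnotLi : ∀ z ∈ N, z ∉ L i := by
        intro z hz hzL
        obtain ⟨hzX, hrz, hdz⟩ := (hmemL i z).mp hzL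
        exact no_same_level_root hgirthH (by omega) hdx (le_of_eq hdx.symm) hdz hrx hrz
          (hNadj hz).symm
      have hcap : (N ∩ (L (i-1) ∪ L i)).card ≤ 1 := by
        rw [Finset.card_le_one]
        intro a ha b hb
        obtain ⟨haN, haU⟩ := Finset.mem_inter.mp ha
        obtain ⟨hbN, hbU⟩ := Finset.mem_inter.mp hb
        have haL : a ∈ L (i-1) := by
          rcases Finset.mem_union.mp haU with h | h
          · exact h
          · exact absurd h (hnotLi a haN)
        have hbL : b ∈ L (i-1) := by
          rcases Finset.mem_union.mp hbU with h | h
          · exact h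
          · exact absurd h (hnotLi b hbN)
        obtain ⟨haX, hra, hda⟩ := (hmemL _ a).mp haL
        obtain ⟨hbX, hrb, hdb⟩ := (hmemL _ b).mp hbL
        exact parent_unique_root hgirthH hi1 (by omega) (le_of_eq hdx.symm)
          (hNadj haN).symm (hNadj hbN).symm hda hdb hra hrb
      have hNcard : N.card ≤ 1 + (N ∩ L (i+1)).card := by
        have h1 : N ⊆ (N ∩ (L (i-1) ∪ L i)) ∪ (N ∩ L (i+1)) := by
          intro y hy
          rcases Finset.mem_union.mp (hNsub hy) with h | h
          · exact Finset.mem_union_left _ (Finset.mem_inter.mpr ⟨hy, h⟩)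
          · exact Finset.mem_union_right _ (Finset.mem_inter.mpr ⟨hy, h⟩)
        calc N.card ≤ _ := Finset.card_le_card h1
          _ ≤ (N ∩ (L (i-1) ∪ L i)).card + (N ∩ L (i+1)).card := Finset.card_union_le _ _
          _ ≤ 1 + (N ∩ L (i+1)).card := by omega
      have hfilt : (L (i+1)).filter (fun y => H.Adj x y) = N ∩ L (i+1) := by
        ext y
        simp only [Finset.mem_filter, Finset.mem_inter, hN, SimpleGraph.mem_neighborFinset]
        tauto
      have hd1 : δ ≤ N.card + cfun x := by
        have e1 := hdegH x hxX
        have e2 := hdeg x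
        have e3 : H.degree x = N.card := rfl
        omega
      rw [hfilt]
      have hfin : δ ≤ 1 + (N ∩ L (i+1)).card + cfun x := by omega
      have hZ := hcast _ _ hfin
      push_cast at hZ
      linarith
    have hpar : ∀ i, i < t → ∀ y ∈ L (i+1), ((L i).filter (fun x => H.Adj x y)).card ≤ 1 := by
      intro i hit y hy
      obtain ⟨hyX, hry, hdy⟩ := (hmemL (i+1) y).mp hy
      rw [Finset.card_le_one]
      intro a ha b hb
      obtain ⟨haL, hadja⟩ := Finset.mem_filter.mp ha
      obtain ⟨hbL, hadjb⟩ := Finset.mem_filter.mp hb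
      obtain ⟨haX, hra, hda⟩ := (hmemL i a).mp haL
      obtain ⟨hbX, hrb, hdb⟩ := (hmemL i b).mp hbL
      exact parent_unique_root hgirthH (j := i+1) (by omega) (by omega) (le_of_eq hdy.symm)
        hadja hadjb (by omega) (by omega) hra hrb
    have main := layers H X L cfun δ t ((δ:ℤ)) hδ1 ht1 hdisjL hsubL hstep0 hstep hpar
      hbudZ (fun x => Int.natCast_nonneg _)
    rw [hL0card] at main
    have heval := odd_eval δ hδ t ht1
    have hfinal : ((nOneStar δ g : ℕ) : ℤ) ≤ (X.card : ℤ) := by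
      have : nOneStar δ g = 1 + δ + ∑ i ∈ Finset.Icc 2 t, (δ-1)^i := by
        unfold nOneStar
        rw [if_pos hgm, ← htdef]
      rw [this, heval]
      push_cast at main ⊢
      linarith
    exact_mod_cast hfinal
end

section
/- Let G be a simple graph with minimum degree δ ≥ 2 and girth g ≥ 3, and let X be a nonempty vertex subset of G with d(X) < δ. Then the induced subgraph G[X] contains at least one cycle. -/
open Finset

lemma deg_start_le_one {W : Type*} [Fintype W] [DecidableEq W] (H : SimpleGraph W)
    [DecidableRel H.Adj] (hac : H.IsAcyclic) {u v : W} (p : H.Walk u v) (hp : p.IsPath)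
    (hmax : ∀ (a b : W) (q : H.Walk a b), q.IsPath → q.length ≤ p.length)
    (hlen : p.length ≠ 0) : H.degree u ≤ 1 := by
  cases p with
  | nil => simp at hlen
  | cons h1 r =>
    rename_i b
    have hr : r.IsPath := hp.of_cons
    have hu : u ∉ r.support := by
      have := hp.support_nodup
      simp [SimpleGraph.Walk.support_cons] at this
      exact this.1
    have hnb : H.neighborFinset u ⊆ {b} := by
      intro a ha
      rw [SimpleGraph.mem_neighborFinset] at ha
      simp only [Finset.mem_singleton]
      by_contra hab
      by_cases hmem : a ∈ (SimpleGraph.Walk.cons h1 r).support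
      · -- a is on the path: build a cycle
        have hau : a ≠ u := ha.ne'
        have hmem' : a ∈ r.support := by
          rcases (SimpleGraph.Walk.mem_support_iff _).1 hmem with h | h
          · exact absurd h hau
          · exact h
        set q := r.takeUntil a hmem' with hq
        have hqp : q.IsPath := hr.takeUntil hmem'
        have huq : u ∉ q.support := fun hc => hu (SimpleGraph.Walk.support_takeUntil_subset r hmem' hc)
        have hw1 : (SimpleGraph.Walk.cons h1 q).IsPath := hqp.cons huq
        have hw1r : (SimpleGraph.Walk.cons h1 q).reverse.IsPath := hw1.reverse
        have hcyc : (SimpleGraph.Walk.cons ha (SimpleGraph.Walk.cons h1 q).reverse).IsCycle := by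
          rw [SimpleGraph.Walk.cons_isCycle_iff]
          refine ⟨hw1r, ?_⟩
          rw [SimpleGraph.Walk.edges_reverse, List.mem_reverse]
          intro hedge
          rw [SimpleGraph.Walk.edges_cons, List.mem_cons] at hedge
          rcases hedge with hedge | hedge
          · rw [Sym2.eq_iff] at hedge
            rcases hedge with ⟨_, hab'⟩ | ⟨_, hau⟩
            · exact hab hab'
            · exact ha.ne hau.symm
          · exact huq (SimpleGraph.Walk.fst_mem_support_of_mem_edges q hedge)
        exact hac _ hcyc
      · -- extend the path
        have : (SimpleGraph.Walk.cons ha.symm (SimpleGraph.Walk.cons h1 r)).IsPath :=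
          hp.cons hmem
        simpa using hmax _ _ _ this
    calc H.degree u = (H.neighborFinset u).card := (H.card_neighborFinset_eq_degree u).symm
      _ ≤ ({b} : Finset W).card := Finset.card_le_card hnb
      _ = 1 := Finset.card_singleton b

lemma exists_two_leaves {W : Type*} [Fintype W] [DecidableEq W] (H : SimpleGraph W)
    [DecidableRel H.Adj] (hac : H.IsAcyclic) (hcard : 2 ≤ Fintype.card W) :
    ∃ u v : W, u ≠ v ∧ H.degree u ≤ 1 ∧ H.degree v ≤ 1 := by
  classical
  have hne : Nonempty W := Fintype.card_pos_iff.mp (by omega)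
  obtain ⟨w0⟩ := hne
  -- the set of path lengths
  let P : ℕ → Prop := fun n => ∃ (a b : W) (q : H.Walk a b), q.IsPath ∧ q.length = n
  have hP0 : P 0 := ⟨w0, w0, SimpleGraph.Walk.nil, by simp, rfl⟩
  have hbd : ∀ n, P n → n < Fintype.card W := by
    rintro n ⟨a, b, q, hq, rfl⟩
    exact hq.length_lt
  let S : Finset ℕ := (Finset.range (Fintype.card W)).filter P
  have hS0 : 0 ∈ S := by
    simp only [S, Finset.mem_filter, Finset.mem_range]
    exact ⟨hbd 0 hP0, hP0⟩
  obtain ⟨a, b, p, hp, hplen⟩ : P (S.max' ⟨0, hS0⟩) := (Finset.mem_filter.1 (S.max'_mem _)).2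
  have hmax : ∀ (x y : W) (q : H.Walk x y), q.IsPath → q.length ≤ p.length := by
    intro x y q hq
    rw [hplen]
    exact S.le_max' _ (Finset.mem_filter.2 ⟨Finset.mem_range.2 (hbd _ ⟨x, y, q, hq, rfl⟩),
      ⟨x, y, q, hq, rfl⟩⟩)
  by_cases hzero : p.length = 0
  · -- no edges at all
    obtain ⟨u, v, huv⟩ := Fintype.exists_pair_of_one_lt_card (by omega : 1 < Fintype.card W)
    have hdeg : ∀ x : W, H.degree x = 0 := by
      intro x
      by_contra hx
      obtain ⟨y, hy⟩ : ∃ y, H.Adj x y := by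
        have := Finset.card_pos.mp (Nat.pos_of_ne_zero (by rwa [H.card_neighborFinset_eq_degree x]))
        obtain ⟨y, hy⟩ := this
        exact ⟨y, (SimpleGraph.mem_neighborFinset _ _ _).1 hy⟩
      have hone : (SimpleGraph.Walk.cons hy SimpleGraph.Walk.nil).IsPath := by
        simp [SimpleGraph.Walk.isPath_def, hy.ne]
      have := hmax _ _ _ hone
      simp at this
      omega
    exact ⟨u, v, huv, by rw [hdeg u]; norm_num, by rw [hdeg v]; norm_num⟩
  · have hab : a ≠ b := by
      intro h
      subst h
      exact hzero (by simpa using congrArg SimpleGraph.Walk.length (SimpleGraph.Path.loop_eq ⟨p, hp⟩ ▸ rfl : (⟨p, hp⟩ : H.Path a a).1 = (SimpleGraph.Path.nil : H.Path a a).1))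
    refine ⟨a, b, hab, ?_, ?_⟩
    · exact deg_start_le_one H hac p hp hmax hzero
    · refine deg_start_le_one H hac p.reverse hp.reverse ?_ (by simpa using hzero)
      intro x y q hq
      rw [SimpleGraph.Walk.length_reverse]
      exact hmax x y q hq

theorem stmt7 {V : Type*} [Fintype V] [DecidableEq V] (G : SimpleGraph V) [DecidableRel G.Adj]
    (g δ : ℕ) (hδ : 2 ≤ δ) (hg : 3 ≤ g)
    (hmin : G.minDegree = δ) (hgirth : G.egirth = (g : ℕ∞))
    (X : Finset V) (hX : X.Nonempty) (hcut : cutSize G X < δ) :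
    ¬ (SimpleGraph.induce (↑X : Set V) G).IsAcyclic := by
  classical
  intro hac
  -- degrees within X and towards Xᶜ
  set dX : V → ℕ := fun v => (X.filter (G.Adj v)).card with hdX
  set dXc : V → ℕ := fun v => (Xᶜ.filter (G.Adj v)).card with hdXc
  have hdegsplit : ∀ v : V, G.degree v = dX v + dXc v := by
    intro v
    rw [← G.card_neighborFinset_eq_degree v, SimpleGraph.neighborFinset_eq_filter]
    rw [← Finset.union_compl X, Finset.filter_union]
    exact Finset.card_union_of_disjoint
      (Finset.disjoint_filter_filter disjoint_compl_right)
  have hdegδ : ∀ v : V, δ ≤ G.degree v := fun v => hmin ▸ G.minDegree_le_degree v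
  have hcuteq : cutSize G X = ∑ v ∈ X, dXc v := by
    rw [cutSize, edgesBetween, Finset.card_filter, Finset.sum_product]
    refine Finset.sum_congr rfl fun x _ => ?_
    exact (Finset.card_filter _ _).symm
  -- degree in the induced graph
  have hinduce : ∀ u : (↑X : Set V),
      (SimpleGraph.induce (↑X : Set V) G).degree u = dX ↑u := by
    intro u
    rw [← SimpleGraph.card_neighborFinset_eq_degree, SimpleGraph.neighborFinset_eq_filter, hdX]
    apply Finset.card_bij (fun (w : (↑X : Set V)) _ => (w : V))
    · intro w hw
      simp only [Finset.mem_filter, Finset.mem_univ, true_and] at hw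
      exact Finset.mem_filter.2 ⟨w.2, hw⟩
    · intro w1 _ w2 _ h
      exact Subtype.ext h
    · intro w hw
      rw [Finset.mem_filter] at hw
      exact ⟨⟨w, hw.1⟩, Finset.mem_filter.2 ⟨Finset.mem_univ _, hw.2⟩, rfl⟩
  by_cases hone : X.card = 1
  · obtain ⟨v, rfl⟩ := Finset.card_eq_one.1 hone
    have h0 : dX v = 0 := by
      simp only [hdX, Finset.filter_singleton, SimpleGraph.irrefl, if_false, Finset.card_empty]
    have h1 := hdegsplit v
    have h2 := hdegδ v
    rw [hcuteq, Finset.sum_singleton] at hcut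
    omega
  · have hcard2 : 2 ≤ Fintype.card (↑X : Set V) := by
      have h1 : Fintype.card (↑X : Set V) = X.card := by simp
      have := hX.card_pos
      omega
    obtain ⟨u, w, huw, hdu, hdw⟩ := exists_two_leaves _ hac hcard2
    have hdu' : dX ↑u ≤ 1 := hinduce u ▸ hdu
    have hdw' : dX ↑w ≤ 1 := hinduce w ▸ hdw
    have hsum : dXc ↑u + dXc ↑w ≤ ∑ v ∈ X, dXc v := by
      have hsub : ({↑u, ↑w} : Finset V) ⊆ X := by
        intro x hx
        rcases Finset.mem_insert.1 hx with rfl | hx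
        · exact u.2
        · rw [Finset.mem_singleton.1 hx]; exact w.2
      calc dXc ↑u + dXc ↑w = ∑ v ∈ ({↑u, ↑w} : Finset V), dXc v := by
            rw [Finset.sum_pair (fun h => huw (Subtype.ext h))]
        _ ≤ ∑ v ∈ X, dXc v := Finset.sum_le_sum_of_subset hsub
    have h1 := hdegsplit ↑u
    have h2 := hdegsplit ↑w
    have h3 := hdegδ ↑u
    have h4 := hdegδ ↑w
    rw [hcuteq] at hcut
    omega
end

section
/- Let G be a simple graph with minimum degree δ ≥ 2 and girth g ≥ 3, and let X be a nonempty vertex subset of G with d(X) < δ. Then G[X] contains a path P = u₀u₁u₂⋯u_{g−3} on g−2 vertices such that for every i ∈ {0, 1, ..., g−3}, every neighbor of uᵢ in G lies in X (i.e., N(uᵢ) ∩ (V(G) − X) = ∅). -/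
open Finset

lemma exists_straight_walk {V : Type*} (G : SimpleGraph V) (u : ℕ → V) :
    ∀ m, (∀ i < m, G.Adj (u i) (u (i+1))) →
    ∃ p : G.Walk (u 0) (u m), p.length = m ∧ p.support = (List.range (m+1)).map u ∧
      ∀ e ∈ p.edges, ∃ i < m, e = s(u i, u (i+1))
  | 0, _ => ⟨SimpleGraph.Walk.nil, rfl, by simp [List.range_succ], by simp⟩
  | (m+1), h => by
    obtain ⟨p, hl, hs, he⟩ := exists_straight_walk G u m (fun i hi => h i (by omega))
    refine ⟨p.concat (h m (by omega)), ?_, ?_, ?_⟩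
    · simp [SimpleGraph.Walk.length_concat, hl]
    · rw [SimpleGraph.Walk.support_concat, hs, List.range_succ]
      simp [List.range_succ]
    · intro e hme
      rw [SimpleGraph.Walk.edges_concat] at hme
      rw [List.concat_eq_append, List.mem_append] at hme
      rcases hme with h1 | h2
      · obtain ⟨i, hi, hei⟩ := he e h1
        exact ⟨i, by omega, hei⟩
      · exact ⟨m, by omega, by simpa using h2⟩

lemma egirth_le_of_closed {V : Type*} (G : SimpleGraph V) (u : ℕ → V) (m : ℕ) (hm : 2 ≤ m)
    (hadj : ∀ i < m, G.Adj (u i) (u (i+1)))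
    (hinj : ∀ i j, i ≤ m → j ≤ m → u i = u j → i = j)
    (hcl : G.Adj (u m) (u 0)) : G.egirth ≤ ((m + 1 : ℕ) : ℕ∞) := by
  obtain ⟨p, hl, hs, he⟩ := exists_straight_walk G u m hadj
  have hpath : p.IsPath := by
    rw [SimpleGraph.Walk.isPath_def, hs]
    refine List.Nodup.map_on ?_ List.nodup_range
    intro i hi j hj hij
    rw [List.mem_range] at hi hj
    exact hinj i j (by omega) (by omega) hij
  have hne : s(u m, u 0) ∉ p.edges := by
    intro hmem
    obtain ⟨i, him, hei⟩ := he _ hmem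
    rcases Sym2.eq_iff.mp hei with ⟨h1, h2⟩ | ⟨h1, h2⟩
    · have := hinj m i (le_refl m) (by omega) h1
      have := hinj 0 (i+1) (by omega) (by omega) h2
      omega
    · have := hinj m (i+1) (le_refl m) (by omega) h1
      have := hinj 0 i (by omega) (by omega) h2
      omega
  have hcyc : (SimpleGraph.Walk.cons hcl p).IsCycle :=
    (SimpleGraph.Walk.cons_isCycle_iff p hcl).mpr ⟨hpath, hne⟩
  have := SimpleGraph.le_egirth.mp (le_refl G.egirth) _ _ hcyc
  simpa [hl] using this

theorem stmt9 {V : Type*} [Fintype V] [DecidableEq V] (G : SimpleGraph V) [DecidableRel G.Adj]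
    (g δ : ℕ) (hδ : 2 ≤ δ) (hg : 3 ≤ g)
    (hmin : G.minDegree = δ) (hgirth : G.egirth = (g : ℕ∞))
    (X : Finset V) (hX : X.Nonempty) (hcut : cutSize G X < δ) :
    ∃ u : Fin (g - 2) → V, Function.Injective u ∧
      (∀ i, u i ∈ X) ∧
      (∀ (i : ℕ) (h : i + 1 < g - 2), G.Adj (u ⟨i, Nat.lt_of_succ_lt h⟩) (u ⟨i + 1, h⟩)) ∧
      (∀ i, ∀ v, G.Adj (u i) v → v ∈ X) := by
  classical
  have hV : Nonempty V := ⟨hX.choose⟩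
  have hdeg : ∀ v : V, δ ≤ G.degree v := fun v => hmin ▸ G.minDegree_le_degree v
  have hsum : cutSize G X = ∑ v ∈ X, ((Xᶜ).filter (G.Adj v)).card := by
    unfold cutSize edgesBetween
    rw [Finset.card_filter, Finset.sum_product]
    exact Finset.sum_congr rfl fun v _ => (Finset.card_filter _ _).symm
  have hdegsplit : ∀ v : V,
      G.degree v = (X.filter (G.Adj v)).card + ((Xᶜ).filter (G.Adj v)).card := by
    intro v
    rw [SimpleGraph.degree, SimpleGraph.neighborFinset_eq_filter, ← Finset.union_compl X,
      Finset.filter_union,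
      Finset.card_union_of_disjoint (Finset.disjoint_filter_filter disjoint_compl_right)]
  set A : Finset V := X.filter (fun v => ∀ w, G.Adj v w → w ∈ X) with hAdef
  set B : Finset V := X \ A with hBdef
  have hmemA : ∀ v ∈ A, v ∈ X ∧ ∀ w, G.Adj v w → w ∈ X := by
    intro v hv; rw [hAdef, Finset.mem_filter] at hv; exact hv
  have hB_c : ∀ v ∈ B, 1 ≤ ((Xᶜ).filter (G.Adj v)).card := by
    intro v hv
    rw [hBdef, Finset.mem_sdiff, hAdef, Finset.mem_filter] at hv
    have : ¬ ∀ w, G.Adj v w → w ∈ X := fun h => hv.2 ⟨hv.1, h⟩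
    push_neg at this
    obtain ⟨w, hw1, hw2⟩ := this
    exact Finset.card_pos.mpr ⟨w, Finset.mem_filter.mpr ⟨Finset.mem_compl.mpr hw2, hw1⟩⟩
  have hBcard : B.card ≤ cutSize G X := by
    rw [hsum]
    calc B.card = ∑ _v ∈ B, 1 := by simp
      _ ≤ ∑ v ∈ B, ((Xᶜ).filter (G.Adj v)).card := Finset.sum_le_sum hB_c
      _ ≤ ∑ v ∈ X, ((Xᶜ).filter (G.Adj v)).card :=
          Finset.sum_le_sum_of_subset (hBdef ▸ Finset.sdiff_subset)
  have hBlt : B.card < δ := lt_of_le_of_lt hBcard hcut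
  -- A is nonempty
  have hAne : A.Nonempty := by
    by_contra hAe
    rw [Finset.not_nonempty_iff_eq_empty] at hAe
    have hBX : B = X := by rw [hBdef, hAe, Finset.sdiff_empty]
    have hx1 : 1 ≤ X.card := Finset.card_pos.mpr hX
    have hcard1 : X.card < δ := by rw [← hBX]; exact hBlt
    have hlow : ∀ v ∈ X, δ + 1 ≤ X.card + ((Xᶜ).filter (G.Adj v)).card := by
      intro v hv
      have h1 : (X.filter (G.Adj v)).card ≤ (X.erase v).card := by
        apply Finset.card_le_card
        intro w hw; rw [Finset.mem_filter] at hw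
        exact Finset.mem_erase.mpr ⟨fun he => G.irrefl (he ▸ hw.2), hw.1⟩
      have h2 := hdegsplit v
      have h3 := hdeg v
      have h4 : (X.erase v).card = X.card - 1 := Finset.card_erase_of_mem hv
      omega
    have hge : X.card * (δ + 1 - X.card) ≤ cutSize G X := by
      rw [hsum]
      calc X.card * (δ + 1 - X.card) = ∑ _v ∈ X, (δ + 1 - X.card) := by
            rw [Finset.sum_const, smul_eq_mul]
        _ ≤ ∑ v ∈ X, ((Xᶜ).filter (G.Adj v)).card :=
            Finset.sum_le_sum (fun v hv => by have := hlow v hv; omega)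
    have hfin : δ ≤ X.card * (δ + 1 - X.card) := by
      obtain ⟨a, ha⟩ : ∃ a, X.card = a + 1 := ⟨X.card - 1, by omega⟩
      obtain ⟨b, hb⟩ : ∃ b, δ + 1 - X.card = b + 1 := ⟨δ - X.card, by omega⟩
      have h6 : a * b + (a + b + 1) = (a + 1) * (b + 1) := by ring
      have h7 : X.card * (δ + 1 - X.card) = (a + 1) * (b + 1) := by rw [hb, ha]
      have h8 : δ = a + b + 1 := by omega
      rw [h7, h8, ← h6]
      exact Nat.le_add_left _ _
    exact Nat.lt_irrefl _ (lt_of_lt_of_le hcut (hfin.trans hge))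
  -- girth consequence
  have hgirth_ge : ∀ (u' : ℕ → V) (m : ℕ), 2 ≤ m → (∀ i < m, G.Adj (u' i) (u' (i+1))) →
      (∀ i j, i ≤ m → j ≤ m → u' i = u' j → i = j) → G.Adj (u' m) (u' 0) → g ≤ m + 1 := by
    intro u' m hm hadj hinj hcl
    have := egirth_le_of_closed G u' m hm hadj hinj hcl
    rw [hgirth] at this
    exact_mod_cast this
  -- the key induction
  have key : ∀ k, k ≤ g - 3 → ∃ u : ℕ → V,
      (∀ i ≤ k, u i ∈ A) ∧ (∀ i < k, G.Adj (u i) (u (i+1))) ∧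
      (∀ i j, i ≤ k → j ≤ k → u i = u j → i = j) := by
    intro k
    induction k with
    | zero =>
      intro _
      obtain ⟨a, ha⟩ := hAne
      exact ⟨fun _ => a, fun i _ => ha, fun i hi => absurd hi (by omega),
        fun i j hi hj _ => by omega⟩
    | succ k ih =>
      intro hk1
      obtain ⟨u, huA, huadj, huinj⟩ := ih (by omega)
      by_cases hext : ∃ w, w ∈ A ∧ (∀ i ≤ k, w ≠ u i) ∧ G.Adj (u k) w
      · obtain ⟨w, hwA, hwne, hwadj⟩ := hext
        refine ⟨fun i => if i ≤ k then u i else w, ?_, ?_, ?_⟩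
        · intro i hi
          by_cases h : i ≤ k
          · simpa [h] using huA i h
          · simpa [h] using hwA
        · intro i hi
          by_cases h : i < k
          · have h1 : i ≤ k := by omega
            have h2 : i + 1 ≤ k := by omega
            simpa [h1, h2] using huadj i h
          · have hik : i = k := by omega
            subst hik
            simpa [le_refl, (show ¬ (i + 1 ≤ i) by omega)] using hwadj
        · intro i j hi hj hij
          by_cases h1 : i ≤ k <;> by_cases h2 : j ≤ k
          · simp only [if_pos h1, if_pos h2] at hij
            exact huinj i j h1 h2 hij
          · simp only [if_pos h1, if_neg h2] at hij
            exact absurd hij.symm (hwne i h1)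
          · simp only [if_neg h1, if_pos h2] at hij
            exact absurd hij (hwne j h2)
          · omega
      · by_cases hext0 : ∃ w, w ∈ A ∧ (∀ i ≤ k, w ≠ u i) ∧ G.Adj (u 0) w
        · obtain ⟨w, hwA, hwne, hwadj⟩ := hext0
          refine ⟨fun i => if i = 0 then w else u (i - 1), ?_, ?_, ?_⟩
          · intro i hi
            by_cases h : i = 0
            · simpa [h] using hwA
            · simpa [h] using huA (i - 1) (by omega)
          · intro i hi
            by_cases h : i = 0
            · subst h
              simpa using hwadj.symm
            · have h1 : ¬ (i + 1 = 0) := by omega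
              simp only [if_neg h, if_neg h1]
              have := huadj (i - 1) (by omega)
              rw [show i - 1 + 1 = i from by omega] at this
              rw [show i + 1 - 1 = i from by omega]
              exact this
          · intro i j hi hj hij
            by_cases h1 : i = 0 <;> by_cases h2 : j = 0
            · omega
            · simp only [if_pos h1, if_neg h2] at hij
              exact absurd hij (hwne (j - 1) (by omega))
            · simp only [if_neg h1, if_pos h2] at hij
              exact absurd hij.symm (hwne (i - 1) (by omega))
            · simp only [if_neg h1, if_neg h2] at hij
              have := huinj (i - 1) (j - 1) (by omega) (by omega) hij
              omega
        · exfalso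
          have hstuck : ∀ w, G.Adj (u k) w → w ∈ A → ∃ i, i ≤ k ∧ w = u i := by
            intro w hadj hwA
            by_contra hc
            push_neg at hc
            exact hext ⟨w, hwA, fun i hi => hc i hi, hadj⟩
          have hstuck0 : ∀ w, G.Adj (u 0) w → w ∈ A → ∃ i, i ≤ k ∧ w = u i := by
            intro w hadj hwA
            by_contra hc
            push_neg at hc
            exact hext0 ⟨w, hwA, fun i hi => hc i hi, hadj⟩
          have hnochord : ∀ j, j + 2 ≤ k → ¬ G.Adj (u k) (u j) := by
            intro j hj hadj
            have hcontr := hgirth_ge (fun i => u (j + i)) (k - j) (by omega)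
              (fun i hi => huadj (j + i) (by omega))
              (fun i i' hi hi' he => by
                have := huinj (j + i) (j + i') (by omega) (by omega) he
                omega)
              (by
                show G.Adj (u (j + (k - j))) (u (j + 0))
                rw [show j + (k - j) = k from by omega, show j + 0 = j from rfl]
                exact hadj)
            omega
          have hnochord0 : ∀ j, 2 ≤ j → j ≤ k → ¬ G.Adj (u 0) (u j) := by
            intro j h2 hjk hadj
            have hcontr := hgirth_ge u j h2 (fun i hi => huadj i (by omega))
              (fun i i' hi hi' he => huinj i i' (by omega) (by omega) he) hadj.symm
            omega
          rcases Nat.eq_zero_or_pos k with hk0 | hkpos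
          · subst hk0
            have hsub : Finset.univ.filter (G.Adj (u 0)) ⊆ B := by
              intro w hw
              rw [Finset.mem_filter] at hw
              have hadj := hw.2
              have hwX : w ∈ X := (hmemA (u 0) (huA 0 le_rfl)).2 w hadj
              rw [hBdef, Finset.mem_sdiff]
              refine ⟨hwX, fun hwA => ?_⟩
              obtain ⟨i, hi, he⟩ := hstuck w hadj hwA
              have hi0 : i = 0 := by omega
              subst hi0
              exact G.irrefl (he ▸ hadj)
            have hdle : G.degree (u 0) ≤ B.card := by
              rw [SimpleGraph.degree, SimpleGraph.neighborFinset_eq_filter]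
              exact Finset.card_le_card hsub
            have := hdeg (u 0)
            omega
          · have hne1 : G.Adj (u (k - 1)) (u k) := by
              have := huadj (k - 1) (by omega)
              rw [show k - 1 + 1 = k from by omega] at this
              exact this
            have hSkB : (G.neighborFinset (u k)).erase (u (k - 1)) ⊆ B := by
              intro w hw
              rw [Finset.mem_erase, SimpleGraph.mem_neighborFinset] at hw
              obtain ⟨hwne, hadj⟩ := hw
              have hwX : w ∈ X := (hmemA (u k) (huA k le_rfl)).2 w hadj
              rw [hBdef, Finset.mem_sdiff]
              refine ⟨hwX, fun hwA => ?_⟩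
              obtain ⟨i, hi, he⟩ := hstuck w hadj hwA
              subst he
              have : i = k ∨ i = k - 1 ∨ i + 2 ≤ k := by omega
              rcases this with h | h | h
              · subst h; exact G.irrefl hadj
              · exact hwne (by rw [h])
              · exact hnochord i h hadj
            have hSkcard : δ - 1 ≤ ((G.neighborFinset (u k)).erase (u (k - 1))).card := by
              have hm : (u (k - 1)) ∈ G.neighborFinset (u k) := by
                rw [SimpleGraph.mem_neighborFinset]; exact hne1.symm
              rw [Finset.card_erase_of_mem hm]
              have h5 : (G.neighborFinset (u k)).card = G.degree (u k) := rfl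
              have := hdeg (u k)
              omega
            have hSk : (G.neighborFinset (u k)).erase (u (k - 1)) = B :=
              Finset.eq_of_subset_of_card_le hSkB (by omega)
            have hS0B : (G.neighborFinset (u 0)).erase (u 1) ⊆ B := by
              intro w hw
              rw [Finset.mem_erase, SimpleGraph.mem_neighborFinset] at hw
              obtain ⟨hwne, hadj⟩ := hw
              have hwX : w ∈ X := (hmemA (u 0) (huA 0 (by omega))).2 w hadj
              rw [hBdef, Finset.mem_sdiff]
              refine ⟨hwX, fun hwA => ?_⟩
              obtain ⟨i, hi, he⟩ := hstuck0 w hadj hwA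
              subst he
              have : i = 0 ∨ i = 1 ∨ 2 ≤ i := by omega
              rcases this with h | h | h
              · subst h; exact G.irrefl hadj
              · exact hwne (by rw [h])
              · exact hnochord0 i h hi hadj
            have hS0card : δ - 1 ≤ ((G.neighborFinset (u 0)).erase (u 1)).card := by
              have hm : (u 1) ∈ G.neighborFinset (u 0) := by
                rw [SimpleGraph.mem_neighborFinset]; exact huadj 0 hkpos
              rw [Finset.card_erase_of_mem hm]
              have h5 : (G.neighborFinset (u 0)).card = G.degree (u 0) := rfl
              have := hdeg (u 0)
              omega
            have hS0 : (G.neighborFinset (u 0)).erase (u 1) = B :=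
              Finset.eq_of_subset_of_card_le hS0B (by omega)
            have hBge : δ - 1 ≤ B.card := by rw [← hSk]; exact hSkcard
            have hBne : B.Nonempty := by
              rw [← Finset.card_pos]
              omega
            obtain ⟨w, hwB⟩ := hBne
            have hwk : G.Adj (u k) w := by
              have hw' : w ∈ (G.neighborFinset (u k)).erase (u (k - 1)) := hSk ▸ hwB
              rw [Finset.mem_erase, SimpleGraph.mem_neighborFinset] at hw'
              exact hw'.2
            have hw0 : G.Adj (u 0) w := by
              have hw' : w ∈ (G.neighborFinset (u 0)).erase (u 1) := hS0 ▸ hwB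
              rw [Finset.mem_erase, SimpleGraph.mem_neighborFinset] at hw'
              exact hw'.2
            have hwnotu : ∀ i, i ≤ k → w ≠ u i := by
              intro i hi he
              have hwA : w ∈ A := he ▸ huA i hi
              rw [hBdef, Finset.mem_sdiff] at hwB
              exact hwB.2 hwA
            have hcontr := hgirth_ge (fun i => if i ≤ k then u i else w) (k + 1) (by omega)
              (fun i hi => by
                by_cases h : i < k
                · have h1 : i ≤ k := by omega
                  have h2 : i + 1 ≤ k := by omega
                  simpa [h1, h2] using huadj i h
                · have hik : i = k := by omega
                  subst hik
                  simpa [le_refl, (show ¬ (i + 1 ≤ i) by omega)] using hwk)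
              (fun i j hi hj hij => by
                by_cases h1 : i ≤ k <;> by_cases h2 : j ≤ k
                · simp only [if_pos h1, if_pos h2] at hij
                  exact huinj i j h1 h2 hij
                · simp only [if_pos h1, if_neg h2] at hij
                  exact absurd hij.symm (hwnotu i h1)
                · simp only [if_neg h1, if_pos h2] at hij
                  exact absurd hij (hwnotu j h2)
                · omega)
              (by
                simpa [(show ¬ (k + 1 ≤ k) by omega), (show (0:ℕ) ≤ k by omega)] using hw0.symm)
            omega
  obtain ⟨u0, h1, h2, h3⟩ := key (g - 3) le_rfl
  refine ⟨fun i => u0 i.val, ?_, ?_, ?_, ?_⟩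
  · intro i j hij
    exact Fin.ext (h3 i.val j.val (by have := i.isLt; omega) (by have := j.isLt; omega) hij)
  · intro i
    exact (hmemA _ (h1 i.val (by have := i.isLt; omega))).1
  · intro i h
    exact h2 i (by omega)
  · intro i v hadj
    exact (hmemA _ (h1 i.val (by have := i.isLt; omega))).2 v hadj
end

section
/- Let G be a bipartite simple graph with minimum degree δ ≥ k ≥ 2 for an integer k. If the second largest adjacency eigenvalue satisfies λ₂(G) < δ − (k−1)/δ, then κ'(G) ≥ k. -/
open Finset

section Aux

set_option linter.unusedSectionVars false
set_option linter.unusedVariables false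

open Matrix in
/-- Rayleigh-quotient bound: any vector orthogonal to a top eigenvector has quadratic form
at most the second largest eigenvalue times its squared norm. -/
lemma quad_le_kth_aux {n : ℕ} {M : Matrix (Fin n) (Fin n) ℝ} (hM : M.IsHermitian) (hn : 1 < n)
    (x : Fin n → ℝ)
    (hx : (fun j => (hM.eigenvectorUnitary : Matrix (Fin n) (Fin n) ℝ) j
      (Tuple.sort hM.eigenvalues ⟨n-1, by omega⟩)) ⬝ᵥ x = 0) :
    x ⬝ᵥ (M *ᵥ x) ≤ kthLargestEigenvalue M 1 * (x ⬝ᵥ x) := by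
  classical
  set U : Matrix (Fin n) (Fin n) ℝ := (hM.eigenvectorUnitary : Matrix (Fin n) (Fin n) ℝ) with hU
  set σ := Tuple.sort hM.eigenvalues with hσ
  set i₀ : Fin n := σ ⟨n-1, by omega⟩ with hi₀
  set y : Fin n → ℝ := star U *ᵥ x with hy
  have hUstar : U * star U = 1 := (Matrix.mem_unitaryGroup_iff).mp hM.eigenvectorUnitary.2
  have hvec : vecMul x U = y := by
    ext j
    simp [hy, vecMul, mulVec, dotProduct, mul_comm, Matrix.star_apply]
  have hy0 : y i₀ = 0 := by
    rw [← hx]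
    simp [hy, mulVec, dotProduct, Matrix.star_apply]
  have hq : x ⬝ᵥ (M *ᵥ x) = ∑ i, hM.eigenvalues i * (y i)^2 := by
    conv_lhs => rw [hM.spectral_theorem, Unitary.conjStarAlgAut_apply]
    rw [← Matrix.mulVec_mulVec, ← Matrix.mulVec_mulVec, dotProduct_mulVec, hvec]
    simp only [Matrix.mulVec_diagonal, dotProduct]
    have hyy : star ((hM.eigenvectorUnitary : Matrix (Fin n) (Fin n) ℝ)) *ᵥ x = y := rfl
    simp only [hyy, Function.comp_apply, RCLike.ofReal_real_eq_id, id_eq]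
    exact Finset.sum_congr rfl fun i _ => by ring
  have hnorm : x ⬝ᵥ x = ∑ i, (y i)^2 := by
    have : x ⬝ᵥ x = y ⬝ᵥ y := by
      rw [← hvec, ← dotProduct_mulVec, hvec, hy, Matrix.mulVec_mulVec, hUstar,
        Matrix.one_mulVec]
    simpa [dotProduct, sq] using this
  set μ := kthLargestEigenvalue M 1 with hμ
  have hμval : μ = (hM.eigenvalues ∘ σ) ((⟨1, hn⟩ : Fin n).rev) := by
    rw [hμ, kthLargestEigenvalue, dif_pos ⟨hM, hn⟩]
  have hle : ∀ i, i ≠ i₀ → hM.eigenvalues i ≤ μ := by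
    intro i hi
    have hp : σ.symm i ≠ ⟨n-1, by omega⟩ := by
      intro h; apply hi; rw [hi₀, ← h, Equiv.apply_symm_apply]
    have hple : σ.symm i ≤ (⟨1, hn⟩ : Fin n).rev := by
      rw [Fin.le_def]
      have := (σ.symm i).isLt
      have hne : (σ.symm i).val ≠ n - 1 := fun h => hp (Fin.ext h)
      simp only [Fin.val_rev]
      omega
    have := Tuple.monotone_sort hM.eigenvalues hple
    rwa [show (hM.eigenvalues ∘ σ) (σ.symm i) = hM.eigenvalues i by
      simp [Function.comp, Equiv.apply_symm_apply], ← hμval] at this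
  rw [hq, hnorm, Finset.mul_sum]
  apply Finset.sum_le_sum
  intro i _
  by_cases h : i = i₀
  · simp [h, hy0]
  · exact mul_le_mul_of_nonneg_right (hle i h) (sq_nonneg _)

variable {V : Type*} [Fintype V] [DecidableEq V] (G : SimpleGraph V) [DecidableRel G.Adj]

lemma edgesBetween_eq_sum (X Y : Finset V) :
    edgesBetween G X Y = ∑ v ∈ X, ∑ u ∈ Y, (if G.Adj v u then 1 else 0) := by
  rw [edgesBetween, Finset.card_filter, Finset.sum_product]

lemma edgesBetween_comm (X Y : Finset V) : edgesBetween G X Y = edgesBetween G Y X := by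
  rw [edgesBetween_eq_sum, edgesBetween_eq_sum, Finset.sum_comm]
  exact Finset.sum_congr rfl fun u _ => Finset.sum_congr rfl fun v _ =>
    if_congr (G.adj_comm v u) rfl rfl

lemma degree_sum_eq (X : Finset V) :
    ∑ v ∈ X, G.degree v = edgesBetween G X X + cutSize G X := by
  rw [cutSize, edgesBetween_eq_sum, edgesBetween_eq_sum, ← Finset.sum_add_distrib]
  apply Finset.sum_congr rfl
  intro v hv
  rw [Finset.sum_add_sum_compl X]
  rw [← SimpleGraph.card_neighborFinset_eq_degree, SimpleGraph.neighborFinset_eq_filter,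
    Finset.card_filter]

lemma deg_LB {δ : ℕ} (hdeg : ∀ v, δ ≤ G.degree v) (X : Finset V) :
    δ * X.card ≤ edgesBetween G X X + cutSize G X := by
  rw [← degree_sum_eq]
  calc δ * X.card = ∑ _v ∈ X, δ := by rw [Finset.sum_const, smul_eq_mul, mul_comm]
  _ ≤ ∑ v ∈ X, G.degree v := Finset.sum_le_sum fun v _ => hdeg v

lemma bip_bound (C : G.Coloring (Fin 2)) (X : Finset V) :
    2 * edgesBetween G X X ≤ X.card ^ 2 := by
  classical
  set X0 := X.filter (fun v => C v = 0) with hX0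
  set X1 := X.filter (fun v => ¬ C v = 0) with hX1
  have hsub : (X ×ˢ X).filter (fun p => G.Adj p.1 p.2) ⊆ (X0 ×ˢ X1) ∪ (X1 ×ˢ X0) := by
    intro p hp
    simp only [Finset.mem_filter, Finset.mem_product] at hp
    have hne := C.valid hp.2
    simp only [Finset.mem_union, Finset.mem_product, hX0, hX1, Finset.mem_filter]
    by_cases h : C p.1 = 0
    · exact Or.inl ⟨⟨hp.1.1, h⟩, hp.1.2, fun h2 => hne (by rw [h, h2])⟩
    · refine Or.inr ⟨⟨hp.1.1, h⟩, hp.1.2, ?_⟩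
      have h1 : C p.1 = 1 := by omega
      by_contra h2
      exact hne (by rw [h1]; omega)
  have h1 : edgesBetween G X X ≤ X0.card * X1.card + X1.card * X0.card := by
    refine (Finset.card_le_card hsub).trans ((Finset.card_union_le _ _).trans ?_)
    simp [Finset.card_product]
  have h2 : X0.card + X1.card = X.card := Finset.card_filter_add_card_filter_not _
  nlinarith [sq_nonneg (X0.card - X1.card : ℤ), h1, h2]

lemma big_side {δ k : ℕ} (C : G.Coloring (Fin 2)) (hdeg : ∀ v, δ ≤ G.degree v)
    (hk : 2 ≤ k) (hδk : k ≤ δ) (X : Finset V) (hX : X.Nonempty)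
    (hc : cutSize G X < k) : 2 * δ ≤ X.card := by
  have h1 := deg_LB G hdeg X
  have h2 := bip_bound G C X
  have h3 : 1 ≤ X.card := hX.card_pos
  by_contra h
  push_neg at h
  have hZ : (δ : ℤ) * X.card ≤ edgesBetween G X X + cutSize G X := by exact_mod_cast h1
  have h2Z : 2 * (edgesBetween G X X : ℤ) ≤ (X.card : ℤ)^2 := by exact_mod_cast h2
  have hcZ : (cutSize G X : ℤ) ≤ (k:ℤ) - 1 := by omega
  nlinarith [mul_nonneg (by omega : (0:ℤ) ≤ (X.card : ℤ) - 1)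
      (by omega : (0:ℤ) ≤ 2*(δ:ℤ) - 1 - X.card), (by exact_mod_cast h3 : (1:ℤ) ≤ X.card),
    (by exact_mod_cast hδk : (k:ℤ) ≤ δ), (by exact_mod_cast hk : (2:ℤ) ≤ k)]

end Aux

set_option maxHeartbeats 1000000 in
open Matrix in
theorem stmt15 {n : ℕ} (k δ : ℕ) (G : SimpleGraph (Fin n)) [DecidableRel G.Adj]
    (hbip : G.Colorable 2) (hk : 2 ≤ k)
    (hmin : G.minDegree = δ) (hδk : k ≤ δ)
    (hlam : kthLargestEigenvalue (G.adjMatrix ℝ) 1 < (δ : ℝ) - ((k : ℝ) - 1) / (δ : ℝ)) :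
    ∀ X : Finset (Fin n), X.Nonempty → X ≠ Finset.univ → k ≤ cutSize G X := by
  classical
  intro X hXne hXuniv
  by_contra hcut
  push_neg at hcut
  obtain ⟨C⟩ := hbip
  have hdeg : ∀ v, δ ≤ G.degree v := fun v => hmin ▸ G.minDegree_le_degree v
  have hXcne : Xᶜ.Nonempty := (Finset.compl_ne_univ_iff_nonempty Xᶜ).mp (by rwa [compl_compl])
  have hcutc : cutSize G Xᶜ = cutSize G X := by
    rw [cutSize, cutSize, compl_compl, edgesBetween_comm]
  have hm : 2 * δ ≤ X.card := big_side G C hdeg hk hδk X hXne hcut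
  have hm' : 2 * δ ≤ Xᶜ.card := big_side G C hdeg hk hδk Xᶜ hXcne (hcutc ▸ hcut)
  have hn1 : 1 < n := by
    have := X.card_le_univ
    simp only [Finset.card_univ, Fintype.card_fin] at this
    omega
  have hM : (G.adjMatrix ℝ).IsHermitian := by
    unfold Matrix.IsHermitian
    ext i j
    simp only [Matrix.conjTranspose_apply, SimpleGraph.adjMatrix_apply, star_trivial]
    exact if_congr (G.adj_comm j i) rfl rfl
  set u0 : Fin n → ℝ := fun j => (hM.eigenvectorUnitary : Matrix (Fin n) (Fin n) ℝ) j
    (Tuple.sort hM.eigenvalues ⟨n-1, by omega⟩) with hu0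
  obtain ⟨a, b, hab, horth⟩ : ∃ a b : ℝ, (a ≠ 0 ∨ b ≠ 0) ∧
      a * (∑ j ∈ X, u0 j) + b * (∑ j ∈ Xᶜ, u0 j) = 0 := by
    by_cases h : (∑ j ∈ X, u0 j) = 0
    · exact ⟨1, 0, Or.inl one_ne_zero, by simp [h]⟩
    · exact ⟨∑ j ∈ Xᶜ, u0 j, -(∑ j ∈ X, u0 j), Or.inr (neg_ne_zero.mpr h), by ring⟩
  set x : Fin n → ℝ := fun v => if v ∈ X then a else b with hxdef
  have hxX : ∀ v ∈ X, x v = a := fun v hv => if_pos hv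
  have hxXc : ∀ v ∈ Xᶜ, x v = b := fun v hv => if_neg (Finset.mem_compl.mp hv)
  -- orthogonality
  have horthx : (fun j => (hM.eigenvectorUnitary : Matrix (Fin n) (Fin n) ℝ) j
      (Tuple.sort hM.eigenvalues ⟨n-1, by omega⟩)) ⬝ᵥ x = 0 := by
    show ∑ j, u0 j * x j = 0
    rw [← Finset.sum_add_sum_compl X]
    have e1 : ∑ j ∈ X, u0 j * x j = a * ∑ j ∈ X, u0 j := by
      rw [Finset.mul_sum]
      exact Finset.sum_congr rfl fun j hj => by rw [hxX j hj]; ring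
    have e2 : ∑ j ∈ Xᶜ, u0 j * x j = b * ∑ j ∈ Xᶜ, u0 j := by
      rw [Finset.mul_sum]
      exact Finset.sum_congr rfl fun j hj => by rw [hxXc j hj]; ring
    rw [e1, e2, horth]
  have hray := quad_le_kth_aux hM hn1 x horthx
  -- block sums
  have hblock : ∀ (S T : Finset (Fin n)) (s t : ℝ), (∀ v ∈ S, x v = s) → (∀ u ∈ T, x u = t) →
      ∑ v ∈ S, ∑ u ∈ T, x v * ((if G.Adj v u then (1:ℝ) else 0) * x u)
        = s * t * (edgesBetween G S T : ℝ) := by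
    intro S T s t hS hT
    have : ((edgesBetween G S T : ℝ)) = ∑ v ∈ S, ∑ u ∈ T, (if G.Adj v u then (1:ℝ) else 0) := by
      rw [edgesBetween_eq_sum]
      push_cast
      exact Finset.sum_congr rfl fun v _ => Finset.sum_congr rfl fun u _ => by
        split <;> simp
    rw [this]
    simp_rw [Finset.mul_sum]
    exact Finset.sum_congr rfl fun v hv => Finset.sum_congr rfl fun u hu => by
      rw [hS v hv, hT u hu]; ring
  have hcutc' : ((cutSize G Xᶜ : ℕ) : ℝ) = ((cutSize G X : ℕ) : ℝ) := by rw [hcutc]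
  have hcXc : ((edgesBetween G Xᶜ X : ℕ) : ℝ) = ((cutSize G X : ℕ) : ℝ) := by
    rw [edgesBetween_comm]; rfl
  have hquad : dotProduct x ((G.adjMatrix ℝ).mulVec x)
      = a * a * (edgesBetween G X X : ℝ) + a * b * (cutSize G X : ℝ)
        + b * a * (cutSize G X : ℝ) + b * b * (edgesBetween G Xᶜ Xᶜ : ℝ) := by
    have hstep : dotProduct x ((G.adjMatrix ℝ).mulVec x)
        = ∑ v, ∑ u, x v * ((if G.Adj v u then (1:ℝ) else 0) * x u) := by
      simp only [dotProduct, Matrix.mulVec, SimpleGraph.adjMatrix_apply, Finset.mul_sum]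
    rw [hstep]
    calc ∑ v, ∑ u, x v * ((if G.Adj v u then (1:ℝ) else 0) * x u)
        = ∑ v ∈ X, (∑ u, x v * ((if G.Adj v u then (1:ℝ) else 0) * x u))
          + ∑ v ∈ Xᶜ, (∑ u, x v * ((if G.Adj v u then (1:ℝ) else 0) * x u)) :=
          (Finset.sum_add_sum_compl X _).symm
      _ = (∑ v ∈ X, ∑ u ∈ X, x v * ((if G.Adj v u then (1:ℝ) else 0) * x u)
            + ∑ v ∈ X, ∑ u ∈ Xᶜ, x v * ((if G.Adj v u then (1:ℝ) else 0) * x u))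
          + (∑ v ∈ Xᶜ, ∑ u ∈ X, x v * ((if G.Adj v u then (1:ℝ) else 0) * x u)
            + ∑ v ∈ Xᶜ, ∑ u ∈ Xᶜ, x v * ((if G.Adj v u then (1:ℝ) else 0) * x u)) := by
          rw [← Finset.sum_add_distrib, ← Finset.sum_add_distrib]
          exact congrArg₂ (· + ·)
            (Finset.sum_congr rfl fun v _ => (Finset.sum_add_sum_compl X _).symm)
            (Finset.sum_congr rfl fun v _ => (Finset.sum_add_sum_compl X _).symm)
      _ = _ := by
          rw [hblock X X a a hxX hxX, hblock X Xᶜ a b hxX hxXc,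
            hblock Xᶜ X b a hxXc hxX, hblock Xᶜ Xᶜ b b hxXc hxXc, hcXc]
          rw [show ((edgesBetween G X Xᶜ : ℕ) : ℝ) = ((cutSize G X : ℕ) : ℝ) from rfl]
          ring
  have hnorm : dotProduct x x = a * a * (X.card : ℝ) + b * b * (Xᶜ.card : ℝ) := by
    show ∑ v, x v * x v = _
    rw [← Finset.sum_add_sum_compl X]
    have e1 : ∑ v ∈ X, x v * x v = a * a * (X.card : ℝ) := by
      rw [show a * a * (X.card : ℝ) = ∑ _v ∈ X, (a*a) by
        rw [Finset.sum_const, nsmul_eq_mul]; ring]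
      exact Finset.sum_congr rfl fun v hv => by rw [hxX v hv]
    have e2 : ∑ v ∈ Xᶜ, x v * x v = b * b * (Xᶜ.card : ℝ) := by
      rw [show b * b * (Xᶜ.card : ℝ) = ∑ _v ∈ Xᶜ, (b*b) by
        rw [Finset.sum_const, nsmul_eq_mul]; ring]
      exact Finset.sum_congr rfl fun v hv => by rw [hxXc v hv]
    rw [e1, e2]
  -- numeric facts
  have hD2 : (2:ℝ) ≤ (δ:ℝ) := by exact_mod_cast le_trans hk hδk
  have hD0 : (0:ℝ) < (δ:ℝ) := by linarith
  have hK2 : (2:ℝ) ≤ (k:ℝ) := by exact_mod_cast hk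
  have hK1 : (0:ℝ) ≤ (k:ℝ) - 1 := by linarith
  have hcK : (cutSize G X : ℝ) ≤ (k:ℝ) - 1 := by
    have h1 : cutSize G X + 1 ≤ k := hcut
    have h2 : ((cutSize G X : ℕ) : ℝ) + 1 ≤ (k:ℝ) := by exact_mod_cast h1
    linarith
  have hmD : 2 * (δ:ℝ) ≤ (X.card : ℝ) := by exact_mod_cast hm
  have hmD' : 2 * (δ:ℝ) ≤ (Xᶜ.card : ℝ) := by exact_mod_cast hm'
  have hE1 : (δ:ℝ) * (X.card:ℝ) - (cutSize G X : ℝ) ≤ (edgesBetween G X X : ℝ) := by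
    have h := deg_LB G hdeg X
    have h2 : (δ:ℝ) * (X.card:ℝ) ≤ (edgesBetween G X X : ℝ) + (cutSize G X : ℝ) := by
      exact_mod_cast h
    linarith
  have hE2 : (δ:ℝ) * (Xᶜ.card:ℝ) - (cutSize G X : ℝ) ≤ (edgesBetween G Xᶜ Xᶜ : ℝ) := by
    have h := deg_LB G hdeg Xᶜ
    have h2 : (δ:ℝ) * (Xᶜ.card:ℝ) ≤ (edgesBetween G Xᶜ Xᶜ : ℝ) + (cutSize G Xᶜ : ℝ) := by
      exact_mod_cast h
    rw [hcutc'] at h2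
    linarith
  have hN : 0 < a * a * (X.card:ℝ) + b * b * (Xᶜ.card:ℝ) := by
    have hm0 : (0:ℝ) < (X.card:ℝ) := by linarith
    have hm0' : (0:ℝ) < (Xᶜ.card:ℝ) := by linarith
    rcases hab with ha | hb
    · nlinarith [mul_pos (mul_self_pos.mpr ha) hm0, mul_nonneg (mul_self_nonneg b) hm0'.le]
    · nlinarith [mul_pos (mul_self_pos.mpr hb) hm0', mul_nonneg (mul_self_nonneg a) hm0.le]
  have h6 : (δ:ℝ) * (a - b)^2 ≤ a * a * (X.card:ℝ) + b * b * (Xᶜ.card:ℝ) := by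
    nlinarith [mul_le_mul_of_nonneg_left hmD (mul_self_nonneg a),
      mul_le_mul_of_nonneg_left hmD' (mul_self_nonneg b),
      mul_nonneg hD0.le (sq_nonneg (a + b))]
  have h7 : ((k:ℝ) - 1) * (a - b)^2
      ≤ ((k:ℝ) - 1) / (δ:ℝ) * (a * a * (X.card:ℝ) + b * b * (Xᶜ.card:ℝ)) := by
    rw [div_mul_eq_mul_div, le_div_iff₀ hD0]
    nlinarith [mul_le_mul_of_nonneg_left h6 hK1]
  have hC : (cutSize G X : ℝ) * (a - b)^2 ≤ ((k:ℝ) - 1) * (a - b)^2 :=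
    mul_le_mul_of_nonneg_right hcK (sq_nonneg _)
  have key : ((δ:ℝ) - ((k:ℝ) - 1) / (δ:ℝ)) * (a * a * (X.card:ℝ) + b * b * (Xᶜ.card:ℝ))
      ≤ dotProduct x ((G.adjMatrix ℝ).mulVec x) := by
    rw [hquad]
    nlinarith [mul_le_mul_of_nonneg_left hE1 (mul_self_nonneg a),
      mul_le_mul_of_nonneg_left hE2 (mul_self_nonneg b), hC, h7]
  have hfin : kthLargestEigenvalue (G.adjMatrix ℝ) 1
        * (a * a * (X.card:ℝ) + b * b * (Xᶜ.card:ℝ))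
      < ((δ:ℝ) - ((k:ℝ) - 1) / (δ:ℝ)) * (a * a * (X.card:ℝ) + b * b * (Xᶜ.card:ℝ)) :=
    mul_lt_mul_of_pos_right hlam hN
  rw [hnorm] at hray
  linarith
end

section
/- Let a ≥ −1 be a real number and let G be a simple graph with minimum degree δ. For any two disjoint nonempty vertex subsets X and Y of G, if λ₂(G, a) ≤ (a+1)δ − max{d(X)/|X|, d(Y)/|Y|}, then e(X, Y)² ≥ [(a+1)δ − d(X)/|X| − λ₂(G, a)] · [(a+1)δ − d(Y)/|Y| − λ₂(G, a)] · |X| · |Y|. -/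
open Finset

section Aux

open Matrix

lemma aux_dot_sum' {n m : ℕ} (v : Fin n → ℝ) (f : Fin m → Fin n → ℝ) :
    v ⬝ᵥ (∑ i, f i) = ∑ i, v ⬝ᵥ (f i) := by
  simp only [dotProduct, Finset.sum_apply, Finset.mul_sum]
  exact Finset.sum_comm

lemma aux_sum_dot' {n m : ℕ} (v : Fin n → ℝ) (f : Fin m → Fin n → ℝ) :
    (∑ i, f i) ⬝ᵥ v = ∑ i, (f i) ⬝ᵥ v := by
  simp only [dotProduct, Finset.sum_apply, Finset.sum_mul]
  exact Finset.sum_comm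

lemma aux_key {n : ℕ} {M : Matrix (Fin n) (Fin n) ℝ} (hM : M.IsHermitian) (hn : 1 < n)
    (z : Fin n → ℝ)
    (hz : (hM.eigenvectorBasis (Tuple.sort hM.eigenvalues ⟨n - 1, by omega⟩) : Fin n → ℝ) ⬝ᵥ z = 0) :
    z ⬝ᵥ (M *ᵥ z) ≤ kthLargestEigenvalue M 1 * (z ⬝ᵥ z) := by
  classical
  set b := hM.eigenvectorBasis with hb
  set μ := hM.eigenvalues with hμ
  set σ := Tuple.sort hM.eigenvalues with hσ
  set w : Fin n → Fin n → ℝ := fun i => (b i : Fin n → ℝ) with hwdef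
  set c : Fin n → ℝ := fun i => w i ⬝ᵥ z with hcdef
  have hw : ∀ i j, w i ⬝ᵥ w j = if i = j then (1:ℝ) else 0 := by
    intro i j
    have := orthonormal_iff_ite.mp b.orthonormal i j
    simpa [PiLp.inner_apply, dotProduct, mul_comm] using this
  have hrepr : z = ∑ i, c i • w i := by
    have h1 := b.sum_repr' (WithLp.toLp 2 z)
    have h2 : ∀ i, (inner ℝ (b i) (WithLp.toLp 2 z) : ℝ) = c i := by
      intro i
      simp [PiLp.inner_apply, dotProduct, hcdef, hwdef, mul_comm]
    calc z = WithLp.ofLp (WithLp.toLp 2 z) := rfl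
    _ = WithLp.ofLp (∑ i, (inner ℝ (b i) (WithLp.toLp 2 z) : ℝ) • b i) := by rw [h1]
    _ = ∑ i, c i • w i := by
        simp only [WithLp.ofLp_sum, WithLp.ofLp_smul]
        refine Finset.sum_congr rfl fun i _ => ?_
        rw [h2]
  have hmul : M *ᵥ z = ∑ i, (c i * μ i) • w i := by
    conv_lhs => rw [hrepr]
    rw [show M *ᵥ (∑ i, c i • w i) = M.mulVecLin (∑ i, c i • w i) from rfl, map_sum]
    refine Finset.sum_congr rfl fun i _ => ?_
    have : M *ᵥ w i = μ i • w i := hM.mulVec_eigenvectorBasis i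
    simp [Matrix.mulVecLin_apply, Matrix.mulVec_smul, this, smul_smul, mul_comm]
  have hdotw : ∀ i, z ⬝ᵥ w i = c i := by
    intro i; rw [dotProduct_comm]
  have hquad : z ⬝ᵥ (M *ᵥ z) = ∑ i, μ i * c i ^ 2 := by
    rw [hmul, aux_dot_sum']
    refine Finset.sum_congr rfl fun i _ => ?_
    rw [dotProduct_smul, hdotw]
    simp [smul_eq_mul]
    ring
  have hnorm : z ⬝ᵥ z = ∑ i, c i ^ 2 := by
    nth_rewrite 2 [hrepr]
    rw [aux_dot_sum']
    refine Finset.sum_congr rfl fun i _ => ?_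
    rw [dotProduct_smul, hdotw, smul_eq_mul, sq]
  have hL : kthLargestEigenvalue M 1 = μ (σ ⟨n - 2, by omega⟩) := by
    rw [kthLargestEigenvalue, dif_pos ⟨hM, hn⟩]
    have : ((⟨1, hn⟩ : Fin n).rev) = (⟨n - 2, by omega⟩ : Fin n) := by
      ext
      rw [Fin.val_rev]
    rw [this]
    rfl
  set i₀ : Fin n := σ ⟨n - 1, by omega⟩ with hi₀
  have hc₀ : c i₀ = 0 := hz
  have hle : ∀ i, i ≠ i₀ → μ i ≤ kthLargestEigenvalue M 1 := by
    intro i hi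
    rw [hL]
    have h1 : σ.symm i ≠ (⟨n - 1, by omega⟩ : Fin n) := by
      intro h
      apply hi
      rw [hi₀, ← h, Equiv.apply_symm_apply]
    have h2 : σ.symm i ≤ (⟨n - 2, by omega⟩ : Fin n) := by
      have := (σ.symm i).isLt
      have hne : (σ.symm i).val ≠ n - 1 := fun h => h1 (Fin.ext h)
      rw [Fin.le_def]
      simp only []
      omega
    have := Tuple.monotone_sort hM.eigenvalues h2
    simpa [hσ, hμ, Equiv.apply_symm_apply] using this
  rw [hquad, hnorm, Finset.mul_sum]
  refine Finset.sum_le_sum fun i _ => ?_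
  by_cases hi : i = i₀
  · simp [hi, hc₀]
  · exact mul_le_mul_of_nonneg_right (hle i hi) (sq_nonneg _)

lemma aux_edgesBetween_sum {n : ℕ} (G : SimpleGraph (Fin n)) [DecidableRel G.Adj]
    (S T : Finset (Fin n)) :
    (edgesBetween G S T : ℝ) = ∑ u ∈ S, ∑ v ∈ T, (if G.Adj u v then (1:ℝ) else 0) := by
  rw [edgesBetween, Finset.card_filter, Finset.sum_product]
  push_cast
  rfl

lemma aux_master (α β qx qy e L cX cY lx ly : ℝ)
    (h1 : lx ≤ qx) (h2 : ly ≤ qy)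
    (h4 : α^2*qx + α*β*e + α*β*e + β^2*qy ≤ L*(α^2*cX + β^2*cY)) :
    α^2*(lx - L*cX) + β^2*(ly - L*cY) + 2*(α*β)*e ≤ 0 := by
  have h5 := mul_le_mul_of_nonneg_left h1 (sq_nonneg α)
  have h6 := mul_le_mul_of_nonneg_left h2 (sq_nonneg β)
  nlinarith [h4, h5, h6]

lemma aux_final (p q e α β : ℝ) (hp0 : 0 ≤ p) (hq0 : 0 ≤ q) (he0 : 0 ≤ e)
    (hne : ¬(α = 0 ∧ β = 0)) (master : α^2*p + β^2*q + 2*(α*β)*e ≤ 0) : p*q ≤ e^2 := by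
  by_cases hα : α = 0
  · have hβ : β ≠ 0 := fun h => hne ⟨hα, h⟩
    subst hα
    have hq : q ≤ 0 := by
      have hb : β^2 > 0 := by positivity
      by_contra h
      push_neg at h
      have := mul_pos hb h
      nlinarith
    have hq' : q = 0 := le_antisymm hq hq0
    rw [hq', mul_zero]
    positivity
  · by_cases hβ : β = 0
    · subst hβ
      have hp : p ≤ 0 := by
        have hb : α^2 > 0 := by positivity
        by_contra h
        push_neg at h
        have := mul_pos hb h
        nlinarith
      have hp' : p = 0 := le_antisymm hp hp0
      rw [hp', zero_mul]
      positivity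
    · have h0 : 0 ≤ α^2*p + β^2*q := by positivity
      have h1 : α^2*p + β^2*q ≤ -(2*(α*β)*e) := by linarith
      have h2 : (α^2*p + β^2*q)^2 ≤ (2*(α*β)*e)^2 := by
        have := sq_le_sq' (by linarith) h1
        simpa using this
      have h3 : 4*(α*β)^2*(p*q) ≤ (α^2*p + β^2*q)^2 := by
        nlinarith [sq_nonneg (α^2*p - β^2*q)]
      have h4 : 0 < (α*β)^2 := by positivity
      nlinarith

end Aux

theorem stmt16 {n : ℕ} (δ : ℕ) (a : ℝ) (G : SimpleGraph (Fin n)) [DecidableRel G.Adj]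
    (ha : -1 ≤ a) (hmin : G.minDegree = δ)
    (X Y : Finset (Fin n)) (hXY : Disjoint X Y) (hX : X.Nonempty) (hY : Y.Nonempty)
    (hlam : kthLargestEigenvalue (a • degreeMatrix G + G.adjMatrix ℝ) 1 ≤
      (a + 1) * (δ : ℝ) -
        max ((cutSize G X : ℝ) / (X.card : ℝ)) ((cutSize G Y : ℝ) / (Y.card : ℝ))) :
    (edgesBetween G X Y : ℝ) ^ 2 ≥
      ((a + 1) * (δ : ℝ) - (cutSize G X : ℝ) / (X.card : ℝ) -
          kthLargestEigenvalue (a • degreeMatrix G + G.adjMatrix ℝ) 1) *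
        ((a + 1) * (δ : ℝ) - (cutSize G Y : ℝ) / (Y.card : ℝ) -
          kthLargestEigenvalue (a • degreeMatrix G + G.adjMatrix ℝ) 1) *
        (X.card : ℝ) * (Y.card : ℝ) := by
  classical
  open Matrix in
  set M : Matrix (Fin n) (Fin n) ℝ := a • degreeMatrix G + G.adjMatrix ℝ with hMdef
  have hM : M.IsHermitian := by
    rw [Matrix.IsHermitian]
    ext i j
    simp only [hMdef, Matrix.conjTranspose_apply, Matrix.add_apply, Matrix.smul_apply,
      degreeMatrix, Matrix.diagonal_apply, SimpleGraph.adjMatrix_apply, star_trivial,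
      smul_eq_mul]
    congr 1
    · by_cases h : i = j
      · subst h; simp
      · have h' : ¬ j = i := fun hh => h hh.symm
        simp [h, h']
    · exact if_congr (G.adj_comm j i) rfl rfl
  have hn : 1 < n := by
    have h2 : 2 ≤ (X ∪ Y).card := by
      rw [Finset.card_union_of_disjoint hXY]
      have := hX.card_pos
      have := hY.card_pos
      omega
    have h3 := Finset.card_le_univ (X ∪ Y)
    simp only [Finset.card_univ, Fintype.card_fin] at h3
    omega
  set χ : Finset (Fin n) → Fin n → ℝ := fun S v => if v ∈ S then 1 else 0 with hχ
  -- quadratic form values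
  have hQ : ∀ S T : Finset (Fin n), χ S ⬝ᵥ (M *ᵥ χ T)
      = a * (∑ u ∈ S ∩ T, (G.degree u : ℝ)) + (edgesBetween G S T : ℝ) := by
    intro S T
    have hstep : χ S ⬝ᵥ (M *ᵥ χ T) = ∑ u ∈ S, ∑ v ∈ T, M u v := by
      simp only [dotProduct, Matrix.mulVec, dotProduct, hχ, ite_mul, mul_ite,
        one_mul, mul_one, zero_mul, mul_zero, Finset.sum_ite_mem, Finset.univ_inter]
    rw [hstep, aux_edgesBetween_sum]
    have hM' : ∀ u v, M u v = a * (if u = v then (G.degree u : ℝ) else 0)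
        + (if G.Adj u v then (1:ℝ) else 0) := by
      intro u v
      simp [hMdef, degreeMatrix, Matrix.diagonal_apply, smul_eq_mul]
    calc ∑ u ∈ S, ∑ v ∈ T, M u v
        = ∑ u ∈ S, ((∑ v ∈ T, a * (if u = v then (G.degree u : ℝ) else 0))
            + ∑ v ∈ T, (if G.Adj u v then (1:ℝ) else 0)) := by
          refine Finset.sum_congr rfl fun u _ => ?_
          rw [← Finset.sum_add_distrib]
          exact Finset.sum_congr rfl fun v _ => hM' u v
      _ = (∑ u ∈ S, a * (if u ∈ T then (G.degree u : ℝ) else 0))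
            + ∑ u ∈ S, ∑ v ∈ T, (if G.Adj u v then (1:ℝ) else 0) := by
          rw [Finset.sum_add_distrib]
          congr 1
          refine Finset.sum_congr rfl fun u _ => ?_
          rw [← Finset.mul_sum, Finset.sum_ite_eq]
      _ = a * (∑ u ∈ S ∩ T, (G.degree u : ℝ))
            + ∑ u ∈ S, ∑ v ∈ T, (if G.Adj u v then (1:ℝ) else 0) := by
          rw [← Finset.mul_sum, Finset.sum_ite_mem]
  have hdot : ∀ S T : Finset (Fin n), χ S ⬝ᵥ χ T = ((S ∩ T).card : ℝ) := by
    intro S T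
    have hterm : ∀ v, χ S v * χ T v = if v ∈ S ∩ T then (1:ℝ) else 0 := by
      intro v
      by_cases h1 : v ∈ S <;> by_cases h2 : v ∈ T <;> simp [hχ, h1, h2]
    rw [show χ S ⬝ᵥ χ T = ∑ v, χ S v * χ T v from rfl,
      Finset.sum_congr rfl fun v _ => hterm v,
      Finset.sum_ite_mem, Finset.univ_inter, Finset.sum_const]
    simp
  -- degree sum decomposition
  have hdegsum : ∀ S : Finset (Fin n),
      (∑ u ∈ S, (G.degree u : ℝ)) = (edgesBetween G S S : ℝ) + (edgesBetween G S Sᶜ : ℝ) := by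
    intro S
    rw [aux_edgesBetween_sum, aux_edgesBetween_sum, ← Finset.sum_add_distrib]
    refine Finset.sum_congr rfl fun u _ => ?_
    rw [Finset.sum_add_sum_compl]
    have : (G.degree u : ℝ) = ∑ v, (if G.Adj u v then (1:ℝ) else 0) := by
      rw [← SimpleGraph.card_neighborFinset_eq_degree, SimpleGraph.neighborFinset_eq_filter,
        Finset.card_filter]
      push_cast
      rfl
    rw [this]
  -- symmetry of edgesBetween
  have hsym : (edgesBetween G Y X : ℝ) = (edgesBetween G X Y : ℝ) := by
    rw [aux_edgesBetween_sum, aux_edgesBetween_sum, Finset.sum_comm]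
    refine Finset.sum_congr rfl fun u _ => Finset.sum_congr rfl fun v _ => ?_
    exact if_congr (G.adj_comm v u) rfl rfl
  -- abbreviations
  set L : ℝ := kthLargestEigenvalue M 1 with hLdef
  set cX : ℝ := (X.card : ℝ) with hcX
  set cY : ℝ := (Y.card : ℝ) with hcYdef
  have hcX0 : 0 < cX := by rw [hcX]; exact_mod_cast hX.card_pos
  have hcY0 : 0 < cY := by rw [hcYdef]; exact_mod_cast hY.card_pos
  set e : ℝ := (edgesBetween G X Y : ℝ) with hedef
  set dX : ℝ := (cutSize G X : ℝ) with hdXdef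
  set dY : ℝ := (cutSize G Y : ℝ) with hdYdef
  have he0 : 0 ≤ e := by positivity
  -- degree lower bound
  have hdeg : ∀ v, (δ : ℝ) ≤ (G.degree v : ℝ) := by
    intro v
    exact_mod_cast hmin ▸ G.minDegree_le_degree v
  have ha1 : 0 ≤ a + 1 := by linarith
  -- quadratic form bounds
  have hQX : ∀ S : Finset (Fin n), (a + 1) * (δ:ℝ) * (S.card : ℝ) - (cutSize G S : ℝ)
      ≤ χ S ⬝ᵥ (M *ᵥ χ S) := by
    intro S
    rw [hQ S S, Finset.inter_self]
    have hs : (∑ u ∈ S, (G.degree u : ℝ)) = (edgesBetween G S S : ℝ) + (cutSize G S : ℝ) := by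
      rw [hdegsum S]; rfl
    have hds : (δ:ℝ) * (S.card : ℝ) ≤ ∑ u ∈ S, (G.degree u : ℝ) := by
      calc (δ:ℝ) * (S.card : ℝ) = ∑ _u ∈ S, (δ:ℝ) := by
            rw [Finset.sum_const, nsmul_eq_mul, mul_comm]
        _ ≤ ∑ u ∈ S, (G.degree u : ℝ) := Finset.sum_le_sum fun u _ => hdeg u
    have h1 : a * (∑ u ∈ S, (G.degree u : ℝ)) + (edgesBetween G S S : ℝ)
        = (a + 1) * (∑ u ∈ S, (G.degree u : ℝ)) - (cutSize G S : ℝ) := by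
      rw [hs]; ring
    rw [h1]
    have := mul_le_mul_of_nonneg_left hds ha1
    nlinarith
  -- orthogonality choice
  set u0 : Fin n → ℝ :=
    (hM.eigenvectorBasis (Tuple.sort hM.eigenvalues ⟨n - 1, by omega⟩) : Fin n → ℝ) with hu0
  obtain ⟨α, β, hne, horth⟩ : ∃ α β : ℝ, ¬(α = 0 ∧ β = 0) ∧
      u0 ⬝ᵥ (α • χ X + β • χ Y) = 0 := by
    by_cases h : u0 ⬝ᵥ χ X = 0 ∧ u0 ⬝ᵥ χ Y = 0
    · refine ⟨1, 1, by simp, ?_⟩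
      rw [dotProduct_add, dotProduct_smul, dotProduct_smul, h.1, h.2]
      simp
    · refine ⟨u0 ⬝ᵥ χ Y, -(u0 ⬝ᵥ χ X), ?_, ?_⟩
      · rintro ⟨h1, h2⟩
        exact h ⟨by linarith [neg_eq_zero.mp h2], h1⟩
      · rw [dotProduct_add, dotProduct_smul, dotProduct_smul]
        simp [smul_eq_mul]
        ring
  set z : Fin n → ℝ := α • χ X + β • χ Y with hz
  have hkey := aux_key hM hn z horth
  -- expand quadratic form
  have hzMz : z ⬝ᵥ (M *ᵥ z) = α^2 * (χ X ⬝ᵥ (M *ᵥ χ X)) + α*β*(χ X ⬝ᵥ (M *ᵥ χ Y))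
      + α*β*(χ Y ⬝ᵥ (M *ᵥ χ X)) + β^2 * (χ Y ⬝ᵥ (M *ᵥ χ Y)) := by
    rw [hz, Matrix.mulVec_add, Matrix.mulVec_smul, Matrix.mulVec_smul,
      add_dotProduct, smul_dotProduct, smul_dotProduct,
      dotProduct_add, dotProduct_add,
      dotProduct_smul, dotProduct_smul, dotProduct_smul,
      dotProduct_smul]
    simp only [smul_eq_mul]
    ring
  have hXYempty : X ∩ Y = ∅ := Finset.disjoint_iff_inter_eq_empty.mp hXY
  have hYXempty : Y ∩ X = ∅ := Finset.disjoint_iff_inter_eq_empty.mp hXY.symm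
  have hzz : z ⬝ᵥ z = α^2 * cX + β^2 * cY := by
    rw [hz, add_dotProduct, smul_dotProduct, smul_dotProduct,
      dotProduct_add, dotProduct_add,
      dotProduct_smul, dotProduct_smul, dotProduct_smul,
      dotProduct_smul, hdot X X, hdot X Y, hdot Y X, hdot Y Y,
      Finset.inter_self, Finset.inter_self, hXYempty, hYXempty]
    simp only [smul_eq_mul, Finset.card_empty, Nat.cast_zero]
    ring
  have hQXY : χ X ⬝ᵥ (M *ᵥ χ Y) = e := by
    rw [hQ X Y, hXYempty]
    simp only [Finset.sum_empty, mul_zero, zero_add]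
    rfl
  have hQYX : χ Y ⬝ᵥ (M *ᵥ χ X) = e := by
    rw [hQ Y X, hYXempty]
    simp only [Finset.sum_empty, mul_zero, zero_add]
    exact hsym
  -- master inequality
  have hcut : (cutSize G X : ℝ) = dX := rfl
  set PX : ℝ := (a + 1) * (δ:ℝ) - dX / cX - L with hPX
  set PY : ℝ := (a + 1) * (δ:ℝ) - dY / cY - L with hPY
  have hPX0 : 0 ≤ PX := by
    have h1 : dX / cX ≤ max (dX / cX) (dY / cY) := le_max_left _ _
    rw [hPX]
    linarith [hlam]
  have hPY0 : 0 ≤ PY := by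
    have h1 : dY / cY ≤ max (dX / cX) (dY / cY) := le_max_right _ _
    rw [hPY]
    linarith [hlam]
  have hPXc : PX * cX = (a + 1) * (δ:ℝ) * cX - dX - L * cX := by
    rw [hPX, sub_mul, sub_mul, div_mul_cancel₀ dX (ne_of_gt hcX0)]
  have hPYc : PY * cY = (a + 1) * (δ:ℝ) * cY - dY - L * cY := by
    rw [hPY, sub_mul, sub_mul, div_mul_cancel₀ dY (ne_of_gt hcY0)]
  have master : α^2 * (PX * cX) + β^2 * (PY * cY) + 2*(α*β)*e ≤ 0 := by
    have h4 := hkey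
    rw [hzMz, hzz, hQXY, hQYX] at h4
    set QXv : ℝ := χ X ⬝ᵥ (M *ᵥ χ X) with hv1
    set QYv : ℝ := χ Y ⬝ᵥ (M *ᵥ χ Y) with hv2
    have h1 : (a + 1) * (δ:ℝ) * cX - dX ≤ QXv := hQX X
    have h2 : (a + 1) * (δ:ℝ) * cY - dY ≤ QYv := hQX Y
    rw [hPXc, hPYc]
    clear_value QXv QYv
    exact aux_master α β QXv QYv e L cX cY _ _ h1 h2 h4
  have hpq : PX * cX * (PY * cY) ≤ e^2 :=
    aux_final (PX * cX) (PY * cY) e α β (mul_nonneg hPX0 (le_of_lt hcX0))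
      (mul_nonneg hPY0 (le_of_lt hcY0)) he0 hne master
  rw [ge_iff_le, show PX * PY * cX * cY = PX * cX * (PY * cY) from by ring]
  exact hpq
end
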